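/- arXiv:math/0606004 — 2 statements merged into one kernel-verified Lean document; each statement's English description precedes it below -/
import Mathlib

section
/- Let G be a group and F a subgroup of G with G₂ ⊆ F ⊆ Z(G). Define 𝒫 = G^{[2,1]}·F^{[2]} and 𝒬 = G^{[3,2]}·F^{[3,1]}. Then (𝒫,𝒬) is a strong parallelepiped structure on G. -/
open scoped Pointwise

namespace HK

/-- Quadruples of elements of `X`, indexed by the vertices `00, 01, 10, 11` of the square. -/
abbrev Quad (X : Type) := X × X × X × X

/-- Vertices of the cube `{0,1}³`. -/
abbrev Vtx := Fin 3 → Bool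

/-- Elements of `X^{[3]} = X⁸`, indexed by the vertices of the cube. -/
abbrev Cube (X : Type) := Vtx → X

variable {X Y : Type}

/-- Apply a map coordinatewise to a quadruple. -/
def map4 (f : X → Y) (p : Quad X) : Quad Y := (f p.1, f p.2.1, f p.2.2.1, f p.2.2.2)

/-- Apply a map coordinatewise to a cube. -/
def mapCube (f : X → Y) (x : Cube X) : Cube Y := fun v => f (x v)

/-- A weak parallelogram structure: the relation `(x00,x01) ∼ (x10,x11) ↔ (x00,x01,x10,x11) ∈ P`
is an equivalence relation, `P` is invariant under exchanging the two middle entries, and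
any three points can be completed to a parallelogram. -/
def IsWeakParallelogram (P : Set (Quad X)) : Prop :=
  (∀ a b : X, (a, b, a, b) ∈ P) ∧
  (∀ a b c d : X, (a, b, c, d) ∈ P → (c, d, a, b) ∈ P) ∧
  (∀ a b c d e f : X, (a, b, c, d) ∈ P → (c, d, e, f) ∈ P → (a, b, e, f) ∈ P) ∧
  (∀ a b c d : X, (a, b, c, d) ∈ P → (a, c, b, d) ∈ P) ∧
  (∀ a b c : X, ∃ d, (a, b, c, d) ∈ P)

/-- A strong parallelogram structure: the completing fourth point is unique. -/
def IsStrongParallelogram (P : Set (Quad X)) : Prop :=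
  IsWeakParallelogram P ∧ ∀ a b c : X, ∃! d, (a, b, c, d) ∈ P

/-- The entry of a quadruple at a vertex of the square. -/
def quadAt (p : Quad X) : Bool → Bool → X
  | false, false => p.1
  | false, true => p.2.1
  | true, false => p.2.2.1
  | true, true => p.2.2.2

/-- The cube whose face `ε₁ = 0` is `p` and whose face `ε₁ = 1` is `q`. -/
def joinQuad (p q : Quad X) : Cube X :=
  fun v => if v 0 = false then quadAt p (v 1) (v 2) else quadAt q (v 1) (v 2)

/-- The vertex of the cube with value `b` at coordinate `i` and values `u,v` at the two
remaining coordinates, taken in increasing order. -/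
def insert3 (i : Fin 3) (b u v : Bool) : Vtx :=
  if i = 0 then ![b, u, v] else if i = 1 then ![u, b, v] else ![u, v, b]

/-- The face `{v : v i = b}` of a cube, as a quadruple in lexicographic order. -/
def face (x : Cube X) (i : Fin 3) (b : Bool) : Quad X :=
  (x (insert3 i b false false), x (insert3 i b false true),
   x (insert3 i b true false), x (insert3 i b true true))

/-- The permutations of the vertices of the cube induced by Euclidean isometries of the unit
cube: a permutation of the three coordinates composed with flips of some coordinates. -/
def cubeSym (σ : Equiv.Perm (Fin 3)) (c : Vtx) (v : Vtx) : Vtx :=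
  fun j => xor (v (σ j)) (c j)

/-- A weak parallelepiped structure `(P, Q)`: every face of an element of `Q` lies in `P`;
`Q` is invariant under the Euclidean permutations of the cube; the relation `≈` on `P`
(`p ≈ q ↔ joinQuad p q ∈ Q`) is an equivalence relation; and seven points whose three
determined faces lie in `P` can be completed to an element of `Q`. -/
def IsWeakParallelepiped (P : Set (Quad X)) (Q : Set (Cube X)) : Prop :=
  IsWeakParallelogram P ∧
  (∀ x ∈ Q, ∀ (i : Fin 3) (b : Bool), face x i b ∈ P) ∧
  (∀ (σ : Equiv.Perm (Fin 3)) (c : Vtx), ∀ x ∈ Q, (fun v => x (cubeSym σ c v)) ∈ Q) ∧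
  (∀ p ∈ P, joinQuad p p ∈ Q) ∧
  (∀ p q : Quad X, joinQuad p q ∈ Q → joinQuad q p ∈ Q) ∧
  (∀ p q r : Quad X, joinQuad p q ∈ Q → joinQuad q r ∈ Q → joinQuad p r ∈ Q) ∧
  (∀ x000 x001 x010 x011 x100 x101 x110 : X,
    (x000, x001, x010, x011) ∈ P → (x000, x010, x100, x110) ∈ P →
    (x000, x001, x100, x101) ∈ P →
    ∃ x111, joinQuad (x000, x001, x010, x011) (x100, x101, x110, x111) ∈ Q)

/-- A strong parallelepiped structure: the completing eighth point is unique. -/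
def IsStrongParallelepiped (P : Set (Quad X)) (Q : Set (Cube X)) : Prop :=
  IsWeakParallelepiped P Q ∧
  ∀ x000 x001 x010 x011 x100 x101 x110 : X,
    (x000, x001, x010, x011) ∈ P → (x000, x010, x100, x110) ∈ P →
    (x000, x001, x100, x101) ∈ P →
    ∃! x111, joinQuad (x000, x001, x010, x011) (x100, x101, x110, x111) ∈ Q

/-- The setoid on `X²` given by the parallelogram relation `∼`. -/
def baseSetoid (P : Set (Quad X)) (hP : IsWeakParallelogram P) : Setoid (X × X) where
  r p q := (p.1, p.2, q.1, q.2) ∈ P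
  iseqv := ⟨fun p => hP.1 p.1 p.2,
            fun h => hP.2.1 _ _ _ _ h,
            fun h h' => hP.2.2.1 _ _ _ _ _ _ h h'⟩

/-- The base `B = X²/∼` of a weak parallelogram structure. -/
def Base (P : Set (Quad X)) (hP : IsWeakParallelogram P) : Type := Quotient (baseSetoid P hP)

/-- The class `⟨x,y⟩ ∈ B` of a pair `(x,y)`. -/
def cls (P : Set (Quad X)) (hP : IsWeakParallelogram P) (x y : X) : Base P hP :=
  Quotient.mk (baseSetoid P hP) (x, y)

/-- The Gowers-type sum over parallelograms attached to a finitely supported `f : X → ℂ`. -/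
noncomputable def gSum2 (P : Set (Quad X)) (f : X →₀ ℂ) : ℂ :=
  ∑ᶠ q ∈ P, f q.1 * (starRingEnd ℂ) (f q.2.1) * (starRingEnd ℂ) (f q.2.2.1) * f q.2.2.2

/-- The seminorm `‖f‖_P = (gSum2 P f)^{1/4}`. -/
noncomputable def pNorm (P : Set (Quad X)) (f : X →₀ ℂ) : ℝ :=
  (gSum2 P f).re ^ ((1 : ℝ) / 4)

/-- `C^{|ε|} z`: conjugate `z` when the vertex `v` has an odd number of `1` entries. -/
noncomputable def cConjFactor (v : Vtx) (z : ℂ) : ℂ :=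
  if xor (v 0) (xor (v 1) (v 2)) then (starRingEnd ℂ) z else z

/-- The Gowers-type sum over parallelepipeds attached to a finitely supported `f : X → ℂ`. -/
noncomputable def gSum3 (Q : Set (Cube X)) (f : X →₀ ℂ) : ℂ :=
  ∑ᶠ x ∈ Q, ∏ v : Vtx, cConjFactor v (f (x v))

/-- The seminorm `‖f‖_Q = (gSum3 Q f)^{1/8}`. -/
noncomputable def qNorm (Q : Set (Cube X)) (f : X →₀ ℂ) : ℝ :=
  (gSum3 Q f).re ^ ((1 : ℝ) / 8)

/-- The structure group of a parallelepiped structure, as a set of bijections of `X`: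
those `g` mapping every parallelogram to an equivalent parallelogram. -/
def structSet (P : Set (Quad X)) (Q : Set (Cube X)) : Set (Equiv.Perm X) :=
  {g | ∀ p ∈ P, map4 g p ∈ P ∧ joinQuad (map4 g p) p ∈ Q}

/-- `x` and `y` lie in the same fiber of `π : X → B`, `π(x) = ⟨i,x⟩`. -/
def sameFiber (P : Set (Quad X)) (i x y : X) : Prop := (i, x, i, y) ∈ P

/-- A vertical quadruple: all four points lie in one fiber. -/
def VerticalQ (P : Set (Quad X)) (i : X) (w : Quad X) : Prop :=
  sameFiber P i w.1 w.2.1 ∧ sameFiber P i w.2.1 w.2.2.1 ∧ sameFiber P i w.2.2.1 w.2.2.2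

/-- `y = u·x` where `u = [w]` is the class of the vertical parallelogram `w`:
`(x,x,x,y)` is a parallelogram equivalent to `w`. -/
def actsRel (P : Set (Quad X)) (Q : Set (Cube X)) (w : Quad X) (x y : X) : Prop :=
  (x, x, x, y) ∈ P ∧ joinQuad (x, x, x, y) w ∈ Q

section Groups

variable (G : Type) [Group G]

/-- The diagonal embedding `G → G^{[2]}`. -/
def diagHom2 : G →* Quad G where
  toFun g := (g, g, g, g)
  map_one' := rfl
  map_mul' _ _ := rfl

/-- The diagonal embedding `G → G^{[3]}`. -/
def diagHom3 : G →* Cube G where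
  toFun g := fun _ => g
  map_one' := rfl
  map_mul' _ _ := rfl

/-- The two dimensional edge group `G^{[2,1]}`. -/
def edgeGroup2 : Subgroup (Quad G) :=
  Subgroup.closure
    {q : Quad G | ∃ g : G, q = (g, g, 1, 1) ∨ q = (g, 1, g, 1) ∨ q = (g, g, g, g)}

/-- The second commutator subgroup `G₃ = [G, G₂]`. -/
def secondCommutator : Subgroup G := ⁅(⊤ : Subgroup G), commutator G⁆

variable {G}

/-- The edge group `F^{[2,1]}` of a subgroup `F ≤ G`, inside `G^{[2]}`. -/
def edgeGroup2Of (F : Subgroup G) : Subgroup (Quad G) :=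
  Subgroup.closure
    {q : Quad G | ∃ u ∈ F, q = (u, u, 1, 1) ∨ q = (u, 1, u, 1) ∨ q = (u, u, u, u)}

/-- `F^{[2]} = F⁴` as a subgroup of `G^{[2]}`. -/
def quadSub (F : Subgroup G) : Subgroup (Quad G) := F.prod (F.prod (F.prod F))

/-- Faces of the cube `{0,1}³`. -/
def IsFace3 (α : Set Vtx) : Prop := ∃ (i : Fin 3) (b : Bool), α = {v : Vtx | v i = b}

/-- Edges of the cube `{0,1}³`. -/
def IsEdge3 (α : Set Vtx) : Prop :=
  ∃ (i j : Fin 3) (b c : Bool), i ≠ j ∧ α = {v : Vtx | v i = b ∧ v j = c}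

open Classical in
/-- The element `g^{[3,α]}` of `G^{[3]}`, with coordinate `g` on `α` and `1` elsewhere. -/
noncomputable def cubeElt (α : Set Vtx) (g : G) : Cube G :=
  fun v => if v ∈ α then g else 1

variable (G)

/-- The face group `G^{[3,2]}`, generated by the `g^{[3,f]}` for faces `f` of the cube. -/
noncomputable def faceGroup : Subgroup (Cube G) :=
  Subgroup.closure {x : Cube G | ∃ (g : G) (α : Set Vtx), IsFace3 α ∧ x = cubeElt α g}

variable {G}

/-- The edge group `F^{[3,1]}` of a subgroup `F ≤ G`, generated by the `u^{[3,e]}` for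
`u ∈ F` and edges `e` of the cube. -/
noncomputable def edgeGroup3 (F : Subgroup G) : Subgroup (Cube G) :=
  Subgroup.closure {x : Cube G | ∃ u ∈ F, ∃ α : Set Vtx, IsEdge3 α ∧ x = cubeElt α u}

end Groups

/-- The data realizing `(PY, QY)` as the nilparallelepiped structure associated to
`G`, `F`, `Γ` via the coset projection `p : G → Y ≅ G/Γ`. -/
def NilWitness (G : Type) [Group G] (F Γ : Subgroup G) {Y : Type} (p : G → Y)
    (PY : Set (Quad Y)) (QY : Set (Cube Y)) : Prop :=
  commutator G ≤ F ∧ F ≤ Subgroup.center G ∧ Γ ⊓ F = ⊥ ∧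
  Function.Surjective p ∧ (∀ g g' : G, p g = p g' ↔ g⁻¹ * g' ∈ Γ) ∧
  PY = map4 p '' ((edgeGroup2 G : Set (Quad G)) * (quadSub F : Set (Quad G))) ∧
  QY = mapCube p '' ((faceGroup G : Set (Cube G)) * (edgeGroup3 F : Set (Cube G)))

/-- `(PY, QY)` is a nilparallelepiped structure. -/
def IsNilStructure {Y : Type} (PY : Set (Quad Y)) (QY : Set (Cube Y)) : Prop :=
  ∃ (G : Type) (inst : Group G) (F Γ : @Subgroup G inst) (p : G → Y),
    @NilWitness G inst F Γ Y p PY QY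

/-- A splitting of the exact sequence `0 → F → P_s → B → 0` for `s = ⟨a₀, b₀⟩`, encoded
by a lift `ψ : X → 𝒫_s` of a homomorphism section `φ : B → P_s` of `q_s`:
`ψ x` is a parallelogram in `𝒫_s` representing the class `φ(π(x))`. -/
def IsSplittingAt (P : Set (Quad X)) (Q : Set (Cube X)) (i a₀ b₀ : X) : Prop :=
  ∃ ψ : X → Quad X,
    (∀ x, ψ x ∈ P) ∧
    (∀ x, (a₀, b₀, (ψ x).1, (ψ x).2.1) ∈ P) ∧
    (∀ x, ((ψ x).1, (ψ x).2.2.1, i, x) ∈ P) ∧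
    (∀ x y, (i, x, i, y) ∈ P → joinQuad (ψ x) (ψ y) ∈ Q) ∧
    (∀ x1 x2 x3, (x1, x3, i, x2) ∈ P →
      ∃ c d, joinQuad ((ψ x1).2.2.1, (ψ x1).2.2.2, c, d) (ψ x2) ∈ Q ∧
        joinQuad ((ψ x1).1, (ψ x1).2.1, c, d) (ψ x3) ∈ Q)

/-- `(B, c)` is a realization of the base group of the parallelogram structure `P`,
`c x y` realizing the class `⟨x,y⟩`. -/
def IsBaseRealization (P : Set (Quad X)) (B : Type) [AddCommGroup B] (c : X → X → B) : Prop :=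
  (Function.Surjective fun p : X × X => c p.1 p.2) ∧
  (∀ a b a' b' : X, c a b = c a' b' ↔ (a, b, a', b') ∈ P) ∧
  (∀ a b d : X, c a b + c b d = c a d)

/-- `(F, fl)` is a realization of the fiber group of the parallelepiped structure `(P, Q)`:
`fl` maps vertical parallelograms onto `F`, separates exactly the `≈`-classes, and is
additive with respect to the composition of vertical parallelograms. -/
def IsFiberRealization (P : Set (Quad X)) (Q : Set (Cube X)) (i : X) (F : Type)
    [AddCommGroup F] (fl : Quad X → F) : Prop :=
  (∀ u : F, ∃ w, VerticalQ P i w ∧ fl w = u) ∧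
  (∀ w w' : Quad X, VerticalQ P i w → VerticalQ P i w' →
    (fl w = fl w' ↔ joinQuad w w' ∈ Q)) ∧
  (∀ x0 x1 x2 x3 x4 x5 : X, sameFiber P i x0 x1 → sameFiber P i x1 x2 →
    sameFiber P i x2 x3 → sameFiber P i x3 x4 → sameFiber P i x4 x5 →
    fl (x0, x1, x2, x3) + fl (x2, x3, x4, x5) = fl (x0, x1, x4, x5))

/-- A divisible (equivalently, injective) abelian group. -/
def IsDivisibleGroup (F : Type) [AddCommGroup F] : Prop :=
  ∀ (u : F) (n : ℕ), 0 < n → ∃ v : F, n • v = u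

/-- A projective abelian group (projective as a `ℤ`-module). -/
def IsProjectiveAdd (B : Type) [AddCommGroup B] : Prop := Module.Projective ℤ B


/-! ### Auxiliary material for Statement 11 -/

section AuxStatement11

variable {G : Type} [Group G] {F : Subgroup G}

private def vt (a b c : Bool) : Vtx := ![a, b, c]

@[simp] private lemma vt_zero (a b c : Bool) : vt a b c 0 = a := rfl
@[simp] private lemma vt_one (a b c : Bool) : vt a b c 1 = b := rfl
@[simp] private lemma vt_two (a b c : Bool) : vt a b c 2 = c := rfl

private lemma vtx_eq (v : Vtx) : v = vt (v 0) (v 1) (v 2) := by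
  funext j; fin_cases j <;> rfl

private def phi (a b c d e f g : G) : Cube G := fun v =>
  a * (cond (v 0) b 1) * (cond (v 1) c 1) * (cond (v 2) d 1) *
    (cond (v 0 && v 1) e 1) * (cond (v 0 && v 2) f 1) * (cond (v 1 && v 2) g 1)

private def Pset (F : Subgroup G) : Set (Quad G) :=
  {q | q.1⁻¹ * q.2.1 * q.2.2.2⁻¹ * q.2.2.1 ∈ F}

private def Qset (F : Subgroup G) : Set (Cube G) :=
  {x | (x (vt false true false))⁻¹ * x (vt false false false) *
          (x (vt true false false))⁻¹ * x (vt true true false) ∈ F ∧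
       (x (vt false false true))⁻¹ * x (vt false false false) *
          (x (vt true false false))⁻¹ * x (vt true false true) ∈ F ∧
       (x (vt false false true))⁻¹ * x (vt false false false) *
          (x (vt false true false))⁻¹ * x (vt false true true) ∈ F ∧
       x (vt true true true) = x (vt true true false) * (x (vt false true false))⁻¹ *
          x (vt false true true) * (x (vt false false true))⁻¹ * x (vt false false false) *
          (x (vt true false false))⁻¹ * x (vt true false true)}

private def Rset (F : Subgroup G) : Set (Cube G) :=
  {x | ∃ a b c d e f g : G, e ∈ F ∧ f ∈ F ∧ g ∈ F ∧ x = phi a b c d e f g}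

open scoped commutatorElement in
private lemma commF (h1 : commutator G ≤ F) (a b : G) : ⁅a, b⁆ ∈ F :=
  h1 (Subgroup.commutator_mem_commutator (Subgroup.mem_top a) (Subgroup.mem_top b))

private lemma normalF (h2 : F ≤ Subgroup.center G) : F.Normal := by
  constructor
  intro n hn g
  have := (Subgroup.mem_center_iff.mp (h2 hn)) g
  rw [this]
  simpa using hn

private lemma cenF (h2 : F ≤ Subgroup.center G) {u : G} (hu : u ∈ F) (z : G) :
    u * z = z * u :=
  ((Subgroup.mem_center_iff.mp (h2 hu)) z).symm

private lemma cswap {u : G} (hu : ∀ z : G, u * z = z * u) (z X : G) :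
    z * (u * X) = u * (z * X) := by
  rw [← mul_assoc, ← hu, mul_assoc]

private lemma modF (h1 : commutator G ≤ F) {w k : G} (hk : k ∈ F)
    (heq : Abelianization.of (w * k⁻¹) = 1) : w ∈ F := by
  have h : w * k⁻¹ ∈ commutator G :=
    (QuotientGroup.eq_one_iff (N := commutator G) (w * k⁻¹)).mp heq
  have := mul_mem (h1 h) hk
  simpa using this

private lemma Rset_subset_Qset (h2 : F ≤ Subgroup.center G) : Rset F ⊆ Qset F := by
  rintro x ⟨a, b, c, d, e, f, g, he, hf, hg, rfl⟩
  have ce := cenF h2 he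
  have cg := cenF h2 hg
  refine ⟨?_, ?_, ?_, ?_⟩
  · show (a*1*c*1*1*1*1)⁻¹ * (a*1*1*1*1*1*1) * (a*b*1*1*1*1*1)⁻¹ * (a*b*c*1*e*1*1) ∈ F
    have h : (a*1*c*1*1*1*1)⁻¹ * (a*1*1*1*1*1*1) * (a*b*1*1*1*1*1)⁻¹ * (a*b*c*1*e*1*1) = e := by
      group
    rw [h]; exact he
  · show (a*1*1*d*1*1*1)⁻¹ * (a*1*1*1*1*1*1) * (a*b*1*1*1*1*1)⁻¹ * (a*b*1*d*1*f*1) ∈ F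
    have h : (a*1*1*d*1*1*1)⁻¹ * (a*1*1*1*1*1*1) * (a*b*1*1*1*1*1)⁻¹ * (a*b*1*d*1*f*1) = f := by
      group
    rw [h]; exact hf
  · show (a*1*1*d*1*1*1)⁻¹ * (a*1*1*1*1*1*1) * (a*1*c*1*1*1*1)⁻¹ * (a*1*c*d*1*1*g) ∈ F
    have h : (a*1*1*d*1*1*1)⁻¹ * (a*1*1*1*1*1*1) * (a*1*c*1*1*1*1)⁻¹ * (a*1*c*d*1*1*g) = g := by
      group
    rw [h]; exact hg
  · show a*b*c*d*e*f*g = (a*b*c*1*e*1*1) * (a*1*c*1*1*1*1)⁻¹ * (a*1*c*d*1*1*g) *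
      (a*1*1*d*1*1*1)⁻¹ * (a*1*1*1*1*1*1) * (a*b*1*1*1*1*1)⁻¹ * (a*b*1*d*1*f*1)
    have h : (a*b*c*1*e*1*1) * (a*1*c*1*1*1*1)⁻¹ * (a*1*c*d*1*1*g) *
        (a*1*1*d*1*1*1)⁻¹ * (a*1*1*1*1*1*1) * (a*b*1*1*1*1*1)⁻¹ * (a*b*1*d*1*f*1)
        = (a*b*c) * (e * (d * (g * f))) := by group
    rw [h, ← cswap ce d, cg f]
    group

end AuxStatement11

section AuxStatement11b

variable {G : Type} [Group G] {F : Subgroup G}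

private lemma Qset_subset_Rset (h2 : F ≤ Subgroup.center G) : Qset F ⊆ Rset F := by
  rintro x ⟨he, hf, hg, hH⟩
  set E := (x (vt false true false))⁻¹ * x (vt false false false) *
    (x (vt true false false))⁻¹ * x (vt true true false) with hEdef
  set Fw := (x (vt false false true))⁻¹ * x (vt false false false) *
    (x (vt true false false))⁻¹ * x (vt true false true) with hFdef
  set Gw := (x (vt false false true))⁻¹ * x (vt false false false) *
    (x (vt false true false))⁻¹ * x (vt false true true) with hGdef
  have ce := cenF h2 he
  have cf := cenF h2 hf
  have cg := cenF h2 hg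
  refine ⟨x (vt false false false), (x (vt false false false))⁻¹ * x (vt true false false),
    (x (vt false false false))⁻¹ * x (vt false true false),
    (x (vt false false false))⁻¹ * x (vt false false true), E, Fw, Gw, he, hf, hg, ?_⟩
  funext v
  obtain ⟨b0, b1, b2, rfl⟩ : ∃ b0 b1 b2, v = vt b0 b1 b2 := ⟨_, _, _, vtx_eq v⟩
  cases b0 <;> cases b1 <;> cases b2
  · show x (vt false false false) = x (vt false false false) * 1 * 1 * 1 * 1 * 1 * 1
    group
  · show x (vt false false true) = x (vt false false false) * 1 * 1 *
      ((x (vt false false false))⁻¹ * x (vt false false true)) * 1 * 1 * 1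
    group
  · show x (vt false true false) = x (vt false false false) * 1 *
      ((x (vt false false false))⁻¹ * x (vt false true false)) * 1 * 1 * 1 * 1
    group
  · show x (vt false true true) = x (vt false false false) * 1 *
      ((x (vt false false false))⁻¹ * x (vt false true false)) *
      ((x (vt false false false))⁻¹ * x (vt false false true)) * 1 * 1 * Gw
    rw [hGdef]; group
  · show x (vt true false false) = x (vt false false false) *
      ((x (vt false false false))⁻¹ * x (vt true false false)) * 1 * 1 * 1 * 1 * 1
    group
  · show x (vt true false true) = x (vt false false false) *
      ((x (vt false false false))⁻¹ * x (vt true false false)) * 1 *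
      ((x (vt false false false))⁻¹ * x (vt false false true)) * 1 * Fw * 1
    rw [hFdef]; group
  · show x (vt true true false) = x (vt false false false) *
      ((x (vt false false false))⁻¹ * x (vt true false false)) *
      ((x (vt false false false))⁻¹ * x (vt false true false)) * 1 * E * 1 * 1
    rw [hEdef]; group
  · show x (vt true true true) = x (vt false false false) *
      ((x (vt false false false))⁻¹ * x (vt true false false)) *
      ((x (vt false false false))⁻¹ * x (vt false true false)) *
      ((x (vt false false false))⁻¹ * x (vt false false true)) * E * Fw * Gw
    rw [hH]
    have s1 : x (vt true true false) * (x (vt false true false))⁻¹ * x (vt false true true) *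
        (x (vt false false true))⁻¹ * x (vt false false false) * (x (vt true false false))⁻¹ *
        x (vt true false true)
        = (x (vt true false false) * (x (vt false false false))⁻¹ * x (vt false true false)) *
          (E * ((x (vt false false false))⁻¹ * x (vt false false true) * (Gw * Fw))) := by
      rw [hEdef, hFdef, hGdef]; group
    have s2 : x (vt false false false) *
        ((x (vt false false false))⁻¹ * x (vt true false false)) *
        ((x (vt false false false))⁻¹ * x (vt false true false)) *
        ((x (vt false false false))⁻¹ * x (vt false false true)) * E * Fw * Gw
        = (x (vt true false false) * (x (vt false false false))⁻¹ * x (vt false true false)) *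
          ((x (vt false false false))⁻¹ * x (vt false false true) * (E * (Fw * Gw))) := by
      group
    rw [s1, s2, cswap ce ((x (vt false false false))⁻¹ * x (vt false false true)), cg Fw]

end AuxStatement11b

section AuxStatement11c

variable {G : Type} [Group G] {F : Subgroup G}

private def A01 : Vtx → Vtx := fun v => vt (v 1) (v 0) (v 2)
private def A12 : Vtx → Vtx := fun v => vt (v 0) (v 2) (v 1)
private def A02 : Vtx → Vtx := fun v => vt (v 2) (v 1) (v 0)
private def Fl0 : Vtx → Vtx := fun v => vt (!(v 0)) (v 1) (v 2)
private def Fl1 : Vtx → Vtx := fun v => vt (v 0) (!(v 1)) (v 2)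
private def Fl2 : Vtx → Vtx := fun v => vt (v 0) (v 1) (!(v 2))

private def TransOK (F : Subgroup G) (A : Vtx → Vtx) : Prop :=
  ∀ x ∈ Qset F, (fun v => x (A v)) ∈ Qset F

private lemma transOK_id : TransOK F (fun v => v) := fun x hx => hx

private lemma transOK_comp {A B : Vtx → Vtx} (hA : TransOK F A) (hB : TransOK F B) :
    TransOK F (fun v => B (A v)) := fun x hx => hA _ (hB x hx)

private lemma transOK_congr {A B : Vtx → Vtx} (h : TransOK F A) (heq : ∀ v, A v = B v) :
    TransOK F B := by
  intro x hx
  have hfun : (fun v => x (B v)) = fun v => x (A v) := by funext v; rw [heq v]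
  rw [hfun]
  exact h x hx

open scoped commutatorElement in
private lemma transOK_A01 (h1 : commutator G ≤ F) (h2 : F ≤ Subgroup.center G) :
    TransOK F A01 := by
  intro x hx
  obtain ⟨a, b, c, d, e, f, g, he, hf, hg, rfl⟩ := Qset_subset_Rset h2 hx
  apply Rset_subset_Qset h2
  have ce := cenF h2 he
  have cg := cenF h2 hg
  have hκ : ⁅b⁻¹, c⁻¹⁆ ∈ F := commF h1 _ _
  have cκ := cenF h2 hκ
  refine ⟨a, c, b, d, ⁅b⁻¹, c⁻¹⁆ * e, g, f, mul_mem hκ he, hg, hf, ?_⟩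
  funext v
  obtain ⟨b0, b1, b2, rfl⟩ : ∃ b0 b1 b2, v = vt b0 b1 b2 := ⟨_, _, _, vtx_eq v⟩
  have hcomm : ⁅b⁻¹, c⁻¹⁆ = b⁻¹ * c⁻¹ * b * c := by rw [commutatorElement_def]; group
  cases b0 <;> cases b1 <;> cases b2
  · show a*1*1*1*1*1*1 = a*1*1*1*1*1*1; rfl
  · show a*1*1*d*1*1*1 = a*1*1*d*1*1*1; rfl
  · show a*b*1*1*1*1*1 = a*1*b*1*1*1*1; group
  · show a*b*1*d*1*f*1 = a*1*b*d*1*1*f; group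
  · show a*1*c*1*1*1*1 = a*c*1*1*1*1*1; group
  · show a*1*c*d*1*1*g = a*c*1*d*1*g*1; group
  · show a*b*c*1*e*1*1 = a*c*b*1*(⁅b⁻¹, c⁻¹⁆ * e)*1*1
    rw [hcomm]; group
  · show a*b*c*d*e*f*g = a*c*b*d*(⁅b⁻¹, c⁻¹⁆ * e)*g*f
    have s : a*c*b*d*(⁅b⁻¹, c⁻¹⁆ * e)*g*f = a*(c*(b*(d*(⁅b⁻¹, c⁻¹⁆*(e*(g*f)))))) := by
      group
    rw [s, cswap cκ d, cg f, hcomm]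
    group

open scoped commutatorElement in
private lemma transOK_A12 (h1 : commutator G ≤ F) (h2 : F ≤ Subgroup.center G) :
    TransOK F A12 := by
  intro x hx
  obtain ⟨a, b, c, d, e, f, g, he, hf, hg, rfl⟩ := Qset_subset_Rset h2 hx
  apply Rset_subset_Qset h2
  have ce := cenF h2 he
  have cf := cenF h2 hf
  have hκ : ⁅c⁻¹, d⁻¹⁆ ∈ F := commF h1 _ _
  have cκ := cenF h2 hκ
  refine ⟨a, b, d, c, f, e, ⁅c⁻¹, d⁻¹⁆ * g, hf, he, mul_mem hκ hg, ?_⟩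
  funext v
  obtain ⟨b0, b1, b2, rfl⟩ : ∃ b0 b1 b2, v = vt b0 b1 b2 := ⟨_, _, _, vtx_eq v⟩
  have hcomm : ⁅c⁻¹, d⁻¹⁆ = c⁻¹ * d⁻¹ * c * d := by rw [commutatorElement_def]; group
  cases b0 <;> cases b1 <;> cases b2
  · show a*1*1*1*1*1*1 = a*1*1*1*1*1*1; rfl
  · show a*1*c*1*1*1*1 = a*1*1*c*1*1*1; group
  · show a*1*1*d*1*1*1 = a*1*d*1*1*1*1; group
  · show a*1*c*d*1*1*g = a*1*d*c*1*1*(⁅c⁻¹, d⁻¹⁆ * g)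
    rw [hcomm]; group
  · show a*b*1*1*1*1*1 = a*b*1*1*1*1*1; rfl
  · show a*b*c*1*e*1*1 = a*b*1*c*1*e*1; group
  · show a*b*1*d*1*f*1 = a*b*d*1*f*1*1; group
  · show a*b*c*d*e*f*g = a*b*d*c*f*e*(⁅c⁻¹, d⁻¹⁆ * g)
    have s : a*b*d*c*f*e*(⁅c⁻¹, d⁻¹⁆ * g) = a*(b*(d*(c*(f*(e*(⁅c⁻¹, d⁻¹⁆*g)))))) := by
      group
    rw [s, cswap cκ e, cswap cκ f, cswap ce f, hcomm]
    group

private lemma transOK_Fl0 (h2 : F ≤ Subgroup.center G) : TransOK F Fl0 := by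
  intro x hx
  obtain ⟨a, b, c, d, e, f, g, he, hf, hg, rfl⟩ := Qset_subset_Rset h2 hx
  apply Rset_subset_Qset h2
  have ce := cenF h2 he
  have cf := cenF h2 hf
  refine ⟨a * b, b⁻¹, c * e, d * f, e⁻¹, f⁻¹, g, inv_mem he, inv_mem hf, hg, ?_⟩
  funext v
  obtain ⟨b0, b1, b2, rfl⟩ : ∃ b0 b1 b2, v = vt b0 b1 b2 := ⟨_, _, _, vtx_eq v⟩
  cases b0 <;> cases b1 <;> cases b2
  · show a*b*1*1*1*1*1 = (a*b)*1*1*1*1*1*1; group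
  · show a*b*1*d*1*f*1 = (a*b)*1*1*(d*f)*1*1*1; group
  · show a*b*c*1*e*1*1 = (a*b)*1*(c*e)*1*1*1*1; group
  · show a*b*c*d*e*f*g = (a*b)*1*(c*e)*(d*f)*1*1*g
    have s : (a*b)*1*(c*e)*(d*f)*1*1*g = a*(b*(c*(e*(d*(f*g))))) := by group
    rw [s, ← cswap ce d]
    group
  · show a*1*1*1*1*1*1 = (a*b)*b⁻¹*1*1*1*1*1; group
  · show a*1*1*d*1*1*1 = (a*b)*b⁻¹*1*(d*f)*1*f⁻¹*1; group
  · show a*1*c*1*1*1*1 = (a*b)*b⁻¹*(c*e)*1*e⁻¹*1*1; group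
  · show a*1*c*d*1*1*g = (a*b)*b⁻¹*(c*e)*(d*f)*e⁻¹*f⁻¹*g
    have s : (a*b)*b⁻¹*(c*e)*(d*f)*e⁻¹*f⁻¹*g = a*(c*(e*(d*(f*(e⁻¹*(f⁻¹*g)))))) := by group
    rw [s, ← cswap ce d, ← cswap ce f]
    group

end AuxStatement11c

section AuxStatement11d

variable {G : Type} [Group G] {F : Subgroup G}

private def permMap (σ : Equiv.Perm (Fin 3)) : Vtx → Vtx := fun v j => v (σ j)
private def flipMap (c : Vtx) : Vtx → Vtx := fun v j => xor (v j) (c j)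

private lemma transOK_A02 (h1 : commutator G ≤ F) (h2 : F ≤ Subgroup.center G) :
    TransOK F A02 := by
  have h := transOK_comp (transOK_comp (transOK_A01 h1 h2) (transOK_A12 h1 h2))
    (transOK_A01 h1 h2)
  exact transOK_congr h (fun v => by funext j; fin_cases j <;> rfl)

private lemma transOK_Fl1 (h1 : commutator G ≤ F) (h2 : F ≤ Subgroup.center G) :
    TransOK F Fl1 := by
  have h := transOK_comp (transOK_comp (transOK_A01 h1 h2) (transOK_Fl0 h2))
    (transOK_A01 h1 h2)
  exact transOK_congr h (fun v => by funext j; fin_cases j <;> rfl)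

private lemma transOK_Fl2 (h1 : commutator G ≤ F) (h2 : F ≤ Subgroup.center G) :
    TransOK F Fl2 := by
  have h := transOK_comp (transOK_comp (transOK_A02 h1 h2) (transOK_Fl0 h2))
    (transOK_A02 h1 h2)
  exact transOK_congr h (fun v => by funext j; fin_cases j <;> rfl)

private lemma transOK_permMap (h1 : commutator G ≤ F) (h2 : F ≤ Subgroup.center G)
    (σ : Equiv.Perm (Fin 3)) : TransOK F (permMap σ) := by
  have hcases : ∀ τ : Equiv.Perm (Fin 3), τ = 1 ∨ τ = Equiv.swap 0 1 ∨ τ = Equiv.swap 0 2 ∨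
      τ = Equiv.swap 1 2 ∨ τ = Equiv.swap 0 1 * Equiv.swap 1 2 ∨
      τ = Equiv.swap 1 2 * Equiv.swap 0 1 := by decide
  rcases hcases σ with h | h | h | h | h | h <;> subst h
  · exact transOK_congr transOK_id
      (fun v => by funext j; exact congrArg v (by fin_cases j <;> decide))
  · exact transOK_congr (transOK_A01 h1 h2)
      (fun v => by funext j; fin_cases j <;> exact congrArg v (by decide))
  · exact transOK_congr (transOK_A02 h1 h2)
      (fun v => by funext j; fin_cases j <;> exact congrArg v (by decide))
  · exact transOK_congr (transOK_A12 h1 h2)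
      (fun v => by funext j; fin_cases j <;> exact congrArg v (by decide))
  · -- σ 0 = 1, σ 1 = 2, σ 2 = 0 : M120
    exact transOK_congr (transOK_comp (transOK_A01 h1 h2) (transOK_A12 h1 h2))
      (fun v => by funext j; fin_cases j <;> exact congrArg v (by decide))
  · exact transOK_congr (transOK_comp (transOK_A12 h1 h2) (transOK_A01 h1 h2))
      (fun v => by funext j; fin_cases j <;> exact congrArg v (by decide))

private lemma transOK_flipMap (h1 : commutator G ≤ F) (h2 : F ≤ Subgroup.center G)
    (c : Vtx) : TransOK F (flipMap c) := by
  have hc0 : c 0 = c 0 := rfl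
  cases hb0 : c 0 <;> cases hb1 : c 1 <;> cases hb2 : c 2
  · exact transOK_congr transOK_id
      (fun v => by funext j; fin_cases j <;> simp [flipMap, hb0, hb1, hb2])
  · exact transOK_congr (transOK_Fl2 h1 h2)
      (fun v => by funext j; fin_cases j <;> simp [flipMap, Fl2, vt, hb0, hb1, hb2])
  · exact transOK_congr (transOK_Fl1 h1 h2)
      (fun v => by funext j; fin_cases j <;> simp [flipMap, Fl1, vt, hb0, hb1, hb2])
  · exact transOK_congr (transOK_comp (transOK_Fl1 h1 h2) (transOK_Fl2 h1 h2))
      (fun v => by funext j; fin_cases j <;> simp [flipMap, Fl1, Fl2, vt, hb0, hb1, hb2])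
  · exact transOK_congr (transOK_Fl0 h2)
      (fun v => by funext j; fin_cases j <;> simp [flipMap, Fl0, vt, hb0, hb1, hb2])
  · exact transOK_congr (transOK_comp (transOK_Fl0 h2) (transOK_Fl2 h1 h2))
      (fun v => by funext j; fin_cases j <;> simp [flipMap, Fl0, Fl2, vt, hb0, hb1, hb2])
  · exact transOK_congr (transOK_comp (transOK_Fl0 h2) (transOK_Fl1 h1 h2))
      (fun v => by funext j; fin_cases j <;> simp [flipMap, Fl0, Fl1, vt, hb0, hb1, hb2])
  · exact transOK_congr
      (transOK_comp (transOK_comp (transOK_Fl0 h2) (transOK_Fl1 h1 h2)) (transOK_Fl2 h1 h2))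
      (fun v => by funext j; fin_cases j <;> simp [flipMap, Fl0, Fl1, Fl2, vt, hb0, hb1, hb2])

private lemma transOK_cubeSym (h1 : commutator G ≤ F) (h2 : F ≤ Subgroup.center G)
    (σ : Equiv.Perm (Fin 3)) (c : Vtx) : TransOK F (cubeSym σ c) := by
  have h := transOK_comp (transOK_permMap h1 h2 σ) (transOK_flipMap h1 h2 c)
  exact transOK_congr h (fun v => rfl)

end AuxStatement11d

section AuxStatement11e

variable {G : Type} [Group G] {F : Subgroup G}

private lemma cubeElt_app_mem {α : Set Vtx} (g : G) {v : Vtx} (hv : v ∈ α) :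
    cubeElt α g v = g := by
  simp [cubeElt, hv]

private lemma cubeElt_app_not_mem {α : Set Vtx} (g : G) {v : Vtx} (hv : v ∉ α) :
    cubeElt α g v = 1 := by
  simp [cubeElt, hv]

private lemma cubeElt_inv (α : Set Vtx) (g : G) : (cubeElt α g)⁻¹ = cubeElt α g⁻¹ := by
  funext v
  by_cases h : v ∈ α <;> simp [cubeElt, h]

private lemma one_mem_Qset : (1 : Cube G) ∈ Qset F := by
  refine ⟨by simpa using F.one_mem, by simpa using F.one_mem, by simpa using F.one_mem, by simp⟩

private lemma hface0 (h2 : F ≤ Subgroup.center G) (h : G) :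
    ∀ y ∈ Qset F, cubeElt {v : Vtx | v 0 = true} h * y ∈ Qset F := by
  intro y hy
  obtain ⟨a, b, c, d, e, f, g, he, hf, hg, rfl⟩ := Qset_subset_Rset h2 hy
  apply Rset_subset_Qset h2
  refine ⟨a, a⁻¹ * h * a * b, c, d, e, f, g, he, hf, hg, ?_⟩
  funext v
  obtain ⟨b0, b1, b2, rfl⟩ : ∃ b0 b1 b2, v = vt b0 b1 b2 := ⟨_, _, _, vtx_eq v⟩
  simp only [Pi.mul_apply]
  cases b0 <;> cases b1 <;> cases b2
  · rw [cubeElt_app_not_mem h (by simp [Set.mem_setOf_eq])]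
    show 1*(a*1*1*1*1*1*1) = a*1*1*1*1*1*1; group
  · rw [cubeElt_app_not_mem h (by simp [Set.mem_setOf_eq])]
    show 1*(a*1*1*d*1*1*1) = a*1*1*d*1*1*1; group
  · rw [cubeElt_app_not_mem h (by simp [Set.mem_setOf_eq])]
    show 1*(a*1*c*1*1*1*1) = a*1*c*1*1*1*1; group
  · rw [cubeElt_app_not_mem h (by simp [Set.mem_setOf_eq])]
    show 1*(a*1*c*d*1*1*g) = a*1*c*d*1*1*g; group
  · rw [cubeElt_app_mem (α := {v : Vtx | v 0 = true}) h rfl]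
    show h*(a*b*1*1*1*1*1) = a*(a⁻¹*h*a*b)*1*1*1*1*1; group
  · rw [cubeElt_app_mem (α := {v : Vtx | v 0 = true}) h rfl]
    show h*(a*b*1*d*1*f*1) = a*(a⁻¹*h*a*b)*1*d*1*f*1; group
  · rw [cubeElt_app_mem (α := {v : Vtx | v 0 = true}) h rfl]
    show h*(a*b*c*1*e*1*1) = a*(a⁻¹*h*a*b)*c*1*e*1*1; group
  · rw [cubeElt_app_mem (α := {v : Vtx | v 0 = true}) h rfl]
    show h*(a*b*c*d*e*f*g) = a*(a⁻¹*h*a*b)*c*d*e*f*g; group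

private lemma hedge0 (h2 : F ≤ Subgroup.center G) {u : G} (hu : u ∈ F) :
    ∀ y ∈ Qset F, cubeElt {v : Vtx | v 0 = true ∧ v 1 = true} u * y ∈ Qset F := by
  intro y hy
  obtain ⟨a, b, c, d, e, f, g, he, hf, hg, rfl⟩ := Qset_subset_Rset h2 hy
  apply Rset_subset_Qset h2
  have cu := cenF h2 hu
  refine ⟨a, b, c, d, u * e, f, g, mul_mem hu he, hf, hg, ?_⟩
  funext v
  obtain ⟨b0, b1, b2, rfl⟩ : ∃ b0 b1 b2, v = vt b0 b1 b2 := ⟨_, _, _, vtx_eq v⟩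
  simp only [Pi.mul_apply]
  cases b0 <;> cases b1 <;> cases b2
  · rw [cubeElt_app_not_mem u (by simp [Set.mem_setOf_eq])]
    show 1*(a*1*1*1*1*1*1) = a*1*1*1*1*1*1; group
  · rw [cubeElt_app_not_mem u (by simp [Set.mem_setOf_eq])]
    show 1*(a*1*1*d*1*1*1) = a*1*1*d*1*1*1; group
  · rw [cubeElt_app_not_mem u (by simp [Set.mem_setOf_eq])]
    show 1*(a*1*c*1*1*1*1) = a*1*c*1*1*1*1; group
  · rw [cubeElt_app_not_mem u (by simp [Set.mem_setOf_eq])]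
    show 1*(a*1*c*d*1*1*g) = a*1*c*d*1*1*g; group
  · rw [cubeElt_app_not_mem u (by simp [Set.mem_setOf_eq])]
    show 1*(a*b*1*1*1*1*1) = a*b*1*1*1*1*1; group
  · rw [cubeElt_app_not_mem u (by simp [Set.mem_setOf_eq])]
    show 1*(a*b*1*d*1*f*1) = a*b*1*d*1*f*1; group
  · rw [cubeElt_app_mem (α := {v : Vtx | v 0 = true ∧ v 1 = true}) u ⟨rfl, rfl⟩]
    show u*(a*b*c*1*e*1*1) = a*b*c*1*(u*e)*1*1
    have s : a*b*c*1*(u*e)*1*1 = a*(b*(c*(u*e))) := by group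
    rw [s, cswap cu c, cswap cu b, cswap cu a]
    group
  · rw [cubeElt_app_mem (α := {v : Vtx | v 0 = true ∧ v 1 = true}) u ⟨rfl, rfl⟩]
    show u*(a*b*c*d*e*f*g) = a*b*c*d*(u*e)*f*g
    have s : a*b*c*d*(u*e)*f*g = a*(b*(c*(d*(u*(e*(f*g)))))) := by group
    rw [s, cswap cu d, cswap cu c, cswap cu b, cswap cu a]
    group

private lemma mul_mem_Qset_transport {z z₀ : Cube G} {B B' : Vtx → Vtx}
    (hBB' : ∀ v, B (B' v) = v) (hB : TransOK F B) (hB' : TransOK F B')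
    (hz : ∀ v, z (B v) = z₀ v)
    (hbase : ∀ y ∈ Qset F, z₀ * y ∈ Qset F) :
    ∀ x ∈ Qset F, z * x ∈ Qset F := by
  intro x hx
  have h3 : z₀ * (fun v => x (B v)) ∈ Qset F := hbase _ (hB x hx)
  have h4 := hB' _ h3
  have heq : z * x = fun w => (z₀ * fun v => x (B v)) (B' w) := by
    funext w
    show z w * x w = z₀ (B' w) * x (B (B' w))
    rw [← hz (B' w), hBB' w]
  rw [heq]
  exact h4

end AuxStatement11e

section AuxStatement11f

variable {G : Type} [Group G] {F : Subgroup G}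

private lemma face_mul_mem (h1 : commutator G ≤ F) (h2 : F ≤ Subgroup.center G)
    (i : Fin 3) (b : Bool) (h : G) :
    ∀ x ∈ Qset F, cubeElt {v : Vtx | v i = b} h * x ∈ Qset F := by
  fin_cases i <;> cases b
  · -- i = 0, b = false
    refine mul_mem_Qset_transport (B := Fl0) (B' := Fl0) ?_ (transOK_Fl0 h2) (transOK_Fl0 h2)
      ?_ (hface0 h2 h)
    · intro v
      obtain ⟨b0, b1, b2, rfl⟩ : ∃ b0 b1 b2, v = vt b0 b1 b2 := ⟨_, _, _, vtx_eq v⟩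
      cases b0 <;> rfl
    · intro v
      obtain ⟨b0, b1, b2, rfl⟩ : ∃ b0 b1 b2, v = vt b0 b1 b2 := ⟨_, _, _, vtx_eq v⟩
      cases b0 <;> simp [cubeElt, Fl0, vt, Set.mem_setOf_eq]
  · -- i = 0, b = true
    exact hface0 h2 h
  · -- i = 1, b = false
    refine mul_mem_Qset_transport (B := fun v => A01 (Fl0 v)) (B' := fun v => Fl0 (A01 v)) ?_
      (transOK_comp (transOK_Fl0 h2) (transOK_A01 h1 h2))
      (transOK_comp (transOK_A01 h1 h2) (transOK_Fl0 h2)) ?_ (hface0 h2 h)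
    · intro v
      obtain ⟨b0, b1, b2, rfl⟩ : ∃ b0 b1 b2, v = vt b0 b1 b2 := ⟨_, _, _, vtx_eq v⟩
      cases b1 <;> rfl
    · intro v
      obtain ⟨b0, b1, b2, rfl⟩ : ∃ b0 b1 b2, v = vt b0 b1 b2 := ⟨_, _, _, vtx_eq v⟩
      cases b0 <;> simp [cubeElt, Fl0, A01, vt, Set.mem_setOf_eq]
  · -- i = 1, b = true
    refine mul_mem_Qset_transport (B := A01) (B' := A01) ?_ (transOK_A01 h1 h2)
      (transOK_A01 h1 h2) ?_ (hface0 h2 h)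
    · intro v
      obtain ⟨b0, b1, b2, rfl⟩ : ∃ b0 b1 b2, v = vt b0 b1 b2 := ⟨_, _, _, vtx_eq v⟩
      rfl
    · intro v
      obtain ⟨b0, b1, b2, rfl⟩ : ∃ b0 b1 b2, v = vt b0 b1 b2 := ⟨_, _, _, vtx_eq v⟩
      cases b0 <;> simp [cubeElt, A01, vt, Set.mem_setOf_eq]
  · -- i = 2, b = false
    refine mul_mem_Qset_transport (B := fun v => A02 (Fl0 v)) (B' := fun v => Fl0 (A02 v)) ?_
      (transOK_comp (transOK_Fl0 h2) (transOK_A02 h1 h2))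
      (transOK_comp (transOK_A02 h1 h2) (transOK_Fl0 h2)) ?_ (hface0 h2 h)
    · intro v
      obtain ⟨b0, b1, b2, rfl⟩ : ∃ b0 b1 b2, v = vt b0 b1 b2 := ⟨_, _, _, vtx_eq v⟩
      cases b2 <;> rfl
    · intro v
      obtain ⟨b0, b1, b2, rfl⟩ : ∃ b0 b1 b2, v = vt b0 b1 b2 := ⟨_, _, _, vtx_eq v⟩
      cases b0 <;> simp [cubeElt, Fl0, A02, vt, Set.mem_setOf_eq]
  · -- i = 2, b = true
    refine mul_mem_Qset_transport (B := A02) (B' := A02) ?_ (transOK_A02 h1 h2)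
      (transOK_A02 h1 h2) ?_ (hface0 h2 h)
    · intro v
      obtain ⟨b0, b1, b2, rfl⟩ : ∃ b0 b1 b2, v = vt b0 b1 b2 := ⟨_, _, _, vtx_eq v⟩
      rfl
    · intro v
      obtain ⟨b0, b1, b2, rfl⟩ : ∃ b0 b1 b2, v = vt b0 b1 b2 := ⟨_, _, _, vtx_eq v⟩
      cases b0 <;> simp [cubeElt, A02, vt, Set.mem_setOf_eq]

end AuxStatement11f

section AuxStatement11g

variable {G : Type} [Group G] {F : Subgroup G}

private lemma edge_mul_mem (h1 : commutator G ≤ F) (h2 : F ≤ Subgroup.center G)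
    (i j : Fin 3) (hij : i ≠ j) (b c : Bool) {u : G} (hu : u ∈ F) :
    ∀ x ∈ Qset F, cubeElt {v : Vtx | v i = b ∧ v j = c} u * x ∈ Qset F := by
  have hflip := fun c' => transOK_flipMap (F := F) h1 h2 c'
  fin_cases i <;> fin_cases j <;> first | (exact absurd rfl hij) | skip
  · -- (0,1)
    refine mul_mem_Qset_transport (B := flipMap (vt (!b) (!c) false))
      (B' := flipMap (vt (!b) (!c) false)) ?_ (hflip _) (hflip _) ?_ (hedge0 h2 hu)
    · intro v
      obtain ⟨b0, b1, b2, rfl⟩ : ∃ b0 b1 b2, v = vt b0 b1 b2 := ⟨_, _, _, vtx_eq v⟩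
      cases b <;> cases c <;> cases b0 <;> cases b1 <;> cases b2 <;> (funext j; fin_cases j <;> rfl)
    · intro v
      obtain ⟨b0, b1, b2, rfl⟩ : ∃ b0 b1 b2, v = vt b0 b1 b2 := ⟨_, _, _, vtx_eq v⟩
      cases b <;> cases c <;> cases b0 <;> cases b1 <;>
        simp [cubeElt, flipMap, vt, Set.mem_setOf_eq]
  · -- (0,2)
    refine mul_mem_Qset_transport (B := fun v => flipMap (vt (!b) false (!c)) (A12 v))
      (B' := fun v => A12 (flipMap (vt (!b) false (!c)) v)) ?_
      (transOK_comp (transOK_A12 h1 h2) (hflip _))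
      (transOK_comp (hflip _) (transOK_A12 h1 h2)) ?_ (hedge0 h2 hu)
    · intro v
      obtain ⟨b0, b1, b2, rfl⟩ : ∃ b0 b1 b2, v = vt b0 b1 b2 := ⟨_, _, _, vtx_eq v⟩
      cases b <;> cases c <;> cases b0 <;> cases b1 <;> cases b2 <;> (funext j; fin_cases j <;> rfl)
    · intro v
      obtain ⟨b0, b1, b2, rfl⟩ : ∃ b0 b1 b2, v = vt b0 b1 b2 := ⟨_, _, _, vtx_eq v⟩
      cases b <;> cases c <;> cases b0 <;> cases b2 <;>
        simp [cubeElt, flipMap, A12, vt, Set.mem_setOf_eq]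
  · -- (1,0)
    refine mul_mem_Qset_transport (B := fun v => flipMap (vt (!c) (!b) false) (A01 v))
      (B' := fun v => A01 (flipMap (vt (!c) (!b) false) v)) ?_
      (transOK_comp (transOK_A01 h1 h2) (hflip _))
      (transOK_comp (hflip _) (transOK_A01 h1 h2)) ?_ (hedge0 h2 hu)
    · intro v
      obtain ⟨b0, b1, b2, rfl⟩ : ∃ b0 b1 b2, v = vt b0 b1 b2 := ⟨_, _, _, vtx_eq v⟩
      cases b <;> cases c <;> cases b0 <;> cases b1 <;> cases b2 <;> (funext j; fin_cases j <;> rfl)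
    · intro v
      obtain ⟨b0, b1, b2, rfl⟩ : ∃ b0 b1 b2, v = vt b0 b1 b2 := ⟨_, _, _, vtx_eq v⟩
      cases b <;> cases c <;> cases b0 <;> cases b1 <;>
        simp [cubeElt, flipMap, A01, vt, Set.mem_setOf_eq]
  · -- (1,2)
    refine mul_mem_Qset_transport (B := fun v => flipMap (vt false (!b) (!c)) (A01 (A12 v)))
      (B' := fun v => A12 (A01 (flipMap (vt false (!b) (!c)) v))) ?_
      (transOK_comp (transOK_comp (transOK_A12 h1 h2) (transOK_A01 h1 h2)) (hflip _))
      (transOK_comp (transOK_comp (hflip _) (transOK_A01 h1 h2)) (transOK_A12 h1 h2)) ?_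
      (hedge0 h2 hu)
    · intro v
      obtain ⟨b0, b1, b2, rfl⟩ : ∃ b0 b1 b2, v = vt b0 b1 b2 := ⟨_, _, _, vtx_eq v⟩
      cases b <;> cases c <;> cases b0 <;> cases b1 <;> cases b2 <;> (funext j; fin_cases j <;> rfl)
    · intro v
      obtain ⟨b0, b1, b2, rfl⟩ : ∃ b0 b1 b2, v = vt b0 b1 b2 := ⟨_, _, _, vtx_eq v⟩
      cases b <;> cases c <;> cases b0 <;> cases b1 <;>
        simp [cubeElt, flipMap, A01, A12, vt, Set.mem_setOf_eq]
  · -- (2,0)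
    refine mul_mem_Qset_transport (B := fun v => flipMap (vt (!c) false (!b)) (A12 (A01 v)))
      (B' := fun v => A01 (A12 (flipMap (vt (!c) false (!b)) v))) ?_
      (transOK_comp (transOK_comp (transOK_A01 h1 h2) (transOK_A12 h1 h2)) (hflip _))
      (transOK_comp (transOK_comp (hflip _) (transOK_A12 h1 h2)) (transOK_A01 h1 h2)) ?_
      (hedge0 h2 hu)
    · intro v
      obtain ⟨b0, b1, b2, rfl⟩ : ∃ b0 b1 b2, v = vt b0 b1 b2 := ⟨_, _, _, vtx_eq v⟩
      cases b <;> cases c <;> cases b0 <;> cases b1 <;> cases b2 <;> (funext j; fin_cases j <;> rfl)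
    · intro v
      obtain ⟨b0, b1, b2, rfl⟩ : ∃ b0 b1 b2, v = vt b0 b1 b2 := ⟨_, _, _, vtx_eq v⟩
      cases b <;> cases c <;> cases b0 <;> cases b1 <;>
        simp [cubeElt, flipMap, A01, A12, vt, Set.mem_setOf_eq]
  · -- (2,1)
    refine mul_mem_Qset_transport (B := fun v => flipMap (vt false (!c) (!b)) (A02 v))
      (B' := fun v => A02 (flipMap (vt false (!c) (!b)) v)) ?_
      (transOK_comp (transOK_A02 h1 h2) (hflip _))
      (transOK_comp (hflip _) (transOK_A02 h1 h2)) ?_ (hedge0 h2 hu)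
    · intro v
      obtain ⟨b0, b1, b2, rfl⟩ : ∃ b0 b1 b2, v = vt b0 b1 b2 := ⟨_, _, _, vtx_eq v⟩
      cases b <;> cases c <;> cases b0 <;> cases b1 <;> cases b2 <;> (funext j; fin_cases j <;> rfl)
    · intro v
      obtain ⟨b0, b1, b2, rfl⟩ : ∃ b0 b1 b2, v = vt b0 b1 b2 := ⟨_, _, _, vtx_eq v⟩
      cases b <;> cases c <;> cases b0 <;> cases b1 <;>
        simp [cubeElt, flipMap, A02, vt, Set.mem_setOf_eq]

end AuxStatement11g

section AuxStatement11h

variable {G : Type} [Group G] {F : Subgroup G}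

private lemma edgeGroup3_subset_Qset (h1 : commutator G ≤ F) (h2 : F ≤ Subgroup.center G) :
    (edgeGroup3 F : Set (Cube G)) ⊆ Qset F := by
  intro ε hε
  have hε' : ε ∈ Subgroup.closure
      {x : Cube G | ∃ u ∈ F, ∃ α : Set Vtx, IsEdge3 α ∧ x = cubeElt α u} := hε
  induction hε' using Subgroup.closure_induction_left with
  | one => exact one_mem_Qset
  | mul_left z hz y hy ih =>
    obtain ⟨u, hu, α, ⟨i, j, b, c, hij, rfl⟩, rfl⟩ := hz
    exact edge_mul_mem h1 h2 i j hij b c hu y (ih hy)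
  | inv_mul_cancel z hz y hy ih =>
    obtain ⟨u, hu, α, ⟨i, j, b, c, hij, rfl⟩, rfl⟩ := hz
    rw [cubeElt_inv]
    exact edge_mul_mem h1 h2 i j hij b c (inv_mem hu) y (ih hy)

private lemma faceGroup_mul_Qset (h1 : commutator G ≤ F) (h2 : F ≤ Subgroup.center G) :
    ∀ w ∈ faceGroup G, ∀ y ∈ Qset F, w * y ∈ Qset F := by
  intro w hw
  have hw' : w ∈ Subgroup.closure
      {x : Cube G | ∃ (g : G) (α : Set Vtx), IsFace3 α ∧ x = cubeElt α g} := hw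
  induction hw' using Subgroup.closure_induction_left with
  | one => intro y hy; simpa using hy
  | mul_left z hz w' hw'' ih =>
    intro y hy
    obtain ⟨g, α, ⟨i, b, rfl⟩, rfl⟩ := hz
    rw [mul_assoc]
    exact face_mul_mem h1 h2 i b g _ (ih hw'' y hy)
  | inv_mul_cancel z hz w' hw'' ih =>
    intro y hy
    obtain ⟨g, α, ⟨i, b, rfl⟩, rfl⟩ := hz
    rw [mul_assoc, cubeElt_inv]
    exact face_mul_mem h1 h2 i b g⁻¹ _ (ih hw'' y hy)

private lemma Qprod_eq (h1 : commutator G ≤ F) (h2 : F ≤ Subgroup.center G) :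
    (faceGroup G : Set (Cube G)) * (edgeGroup3 F : Set (Cube G)) = Qset F := by
  apply Set.Subset.antisymm
  · rintro x ⟨w, hw, ε, hε, rfl⟩
    exact faceGroup_mul_Qset h1 h2 w hw ε (edgeGroup3_subset_Qset h1 h2 hε)
  · intro x hx
    obtain ⟨a, b, c, d, e, f, g, he, hf, hg, rfl⟩ := Qset_subset_Rset h2 hx
    refine ⟨cubeElt {v : Vtx | v 0 = false} a * cubeElt {v : Vtx | v 0 = true} a *
        cubeElt {v : Vtx | v 0 = true} b * cubeElt {v : Vtx | v 1 = true} c *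
        cubeElt {v : Vtx | v 2 = true} d, ?_,
      cubeElt {v : Vtx | v 0 = true ∧ v 1 = true} e *
        cubeElt {v : Vtx | v 0 = true ∧ v 2 = true} f *
        cubeElt {v : Vtx | v 1 = true ∧ v 2 = true} g, ?_, ?_⟩
    · refine mul_mem (mul_mem (mul_mem (mul_mem ?_ ?_) ?_) ?_) ?_ <;>
        exact Subgroup.subset_closure ⟨_, _, ⟨_, _, rfl⟩, rfl⟩
    · refine mul_mem (mul_mem ?_ ?_) ?_
      · exact Subgroup.subset_closure ⟨e, he, _, ⟨0, 1, true, true, by decide, rfl⟩, rfl⟩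
      · exact Subgroup.subset_closure ⟨f, hf, _, ⟨0, 2, true, true, by decide, rfl⟩, rfl⟩
      · exact Subgroup.subset_closure ⟨g, hg, _, ⟨1, 2, true, true, by decide, rfl⟩, rfl⟩
    · funext v
      obtain ⟨b0, b1, b2, rfl⟩ : ∃ b0 b1 b2, v = vt b0 b1 b2 := ⟨_, _, _, vtx_eq v⟩
      cases b0 <;> cases b1 <;> cases b2 <;>
        simp [Pi.mul_apply, cubeElt, Set.mem_setOf_eq, vt, phi, mul_assoc]

end AuxStatement11h

section AuxStatement11i

variable {G : Type} [Group G] {F : Subgroup G}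

private lemma quadSub_subset_Pset : (quadSub F : Set (Quad G)) ⊆ Pset F := by
  intro q hq
  have h1' : q.1 ∈ F := hq.1
  have h2' : q.2.1 ∈ F := hq.2.1
  have h3' : q.2.2.1 ∈ F := hq.2.2.1
  have h4' : q.2.2.2 ∈ F := hq.2.2.2
  exact mul_mem (mul_mem (mul_mem (inv_mem h1') h2') (inv_mem h4')) h3'

private lemma edgeGroup2_mul_Pset (h1 : commutator G ≤ F) :
    ∀ p ∈ edgeGroup2 G, ∀ y ∈ Pset F, p * y ∈ Pset F := by
  intro p hp
  have hp' : p ∈ Subgroup.closure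
      {q : Quad G | ∃ g : G, q = (g, g, 1, 1) ∨ q = (g, 1, g, 1) ∨ q = (g, g, g, g)} := hp
  induction hp' using Subgroup.closure_induction_left with
  | one => intro y hy; simpa using hy
  | mul_left z hz w hw ih =>
    intro y hy
    have hwy := ih hw y hy
    rw [mul_assoc]
    obtain ⟨g, rfl | rfl | rfl⟩ := hz <;>
    · refine modF h1 hwy ?_
      apply Additive.ofMul.injective
      simp only [Prod.fst_mul, Prod.snd_mul, map_mul, map_inv, map_one, ofMul_mul, ofMul_inv, ofMul_one]
      abel
  | inv_mul_cancel z hz w hw ih =>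
    intro y hy
    have hwy := ih hw y hy
    rw [mul_assoc]
    obtain ⟨g, rfl | rfl | rfl⟩ := hz <;>
    · refine modF h1 hwy ?_
      apply Additive.ofMul.injective
      simp only [Prod.inv_mk, Prod.fst_mul, Prod.snd_mul, map_mul, map_inv, ofMul_mul,
        ofMul_inv, ofMul_one, map_one, inv_one]
      abel

private lemma Pprod_eq (h1 : commutator G ≤ F) :
    (edgeGroup2 G : Set (Quad G)) * (quadSub F : Set (Quad G)) = Pset F := by
  apply Set.Subset.antisymm
  · rintro x ⟨p, hp, q, hq, rfl⟩
    exact edgeGroup2_mul_Pset h1 p hp q (quadSub_subset_Pset hq)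
  · rintro ⟨a, b, c, d⟩ hx
    have hk : a⁻¹ * b * d⁻¹ * c ∈ F := hx
    refine ⟨(a, a, a, a) * ((a⁻¹*b, 1, a⁻¹*b, 1)⁻¹ * (a⁻¹*b, a⁻¹*b, a⁻¹*b, a⁻¹*b)) *
      ((a⁻¹*c, a⁻¹*c, 1, 1)⁻¹ * (a⁻¹*c, a⁻¹*c, a⁻¹*c, a⁻¹*c)), ?_, (1, 1, 1, c⁻¹*a*b⁻¹*d), ?_, ?_⟩
    · refine mul_mem (mul_mem ?_ (mul_mem (inv_mem ?_) ?_)) (mul_mem (inv_mem ?_) ?_)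
      · exact Subgroup.subset_closure ⟨a, Or.inr (Or.inr rfl)⟩
      · exact Subgroup.subset_closure ⟨a⁻¹*b, Or.inr (Or.inl rfl)⟩
      · exact Subgroup.subset_closure ⟨a⁻¹*b, Or.inr (Or.inr rfl)⟩
      · exact Subgroup.subset_closure ⟨a⁻¹*c, Or.inl rfl⟩
      · exact Subgroup.subset_closure ⟨a⁻¹*c, Or.inr (Or.inr rfl)⟩
    · refine ⟨F.one_mem, F.one_mem, F.one_mem, ?_⟩
      refine modF h1 (inv_mem hk) ?_
      apply Additive.ofMul.injective
      simp only [map_mul, map_inv, map_one, ofMul_mul, ofMul_inv, ofMul_one]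
      abel
    · refine Prod.ext ?_ (Prod.ext ?_ (Prod.ext ?_ ?_)) <;>
        simp only [Prod.inv_mk, Prod.fst_mul, Prod.snd_mul, Prod.mk_mul_mk] <;> group

end AuxStatement11i

section AuxStatement11j

variable {G : Type} [Group G] {F : Subgroup G}

private lemma Pset_wpg (h1 : commutator G ≤ F) : IsWeakParallelogram (Pset F) := by
  refine ⟨?_, ?_, ?_, ?_, ?_⟩
  · intro a b
    show a⁻¹ * b * b⁻¹ * a ∈ F
    refine modF h1 F.one_mem ?_
    apply Additive.ofMul.injective
    simp only [map_mul, map_inv, map_one, ofMul_mul, ofMul_inv, ofMul_one]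
    abel
  · intro a b c d h
    have hk : a⁻¹ * b * d⁻¹ * c ∈ F := h
    show c⁻¹ * d * b⁻¹ * a ∈ F
    refine modF h1 (inv_mem hk) ?_
    apply Additive.ofMul.injective
    simp only [map_mul, map_inv, map_one, ofMul_mul, ofMul_inv, ofMul_one]
    abel
  · intro a b c d e f h h'
    have hk : a⁻¹ * b * d⁻¹ * c ∈ F := h
    have hk' : c⁻¹ * d * f⁻¹ * e ∈ F := h'
    show a⁻¹ * b * f⁻¹ * e ∈ F
    refine modF h1 (mul_mem hk hk') ?_
    apply Additive.ofMul.injective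
    simp only [map_mul, map_inv, map_one, ofMul_mul, ofMul_inv, ofMul_one]
    abel
  · intro a b c d h
    have hk : a⁻¹ * b * d⁻¹ * c ∈ F := h
    show a⁻¹ * c * d⁻¹ * b ∈ F
    refine modF h1 hk ?_
    apply Additive.ofMul.injective
    simp only [map_mul, map_inv, map_one, ofMul_mul, ofMul_inv, ofMul_one]
    abel
  · intro a b c
    refine ⟨c * a⁻¹ * b, ?_⟩
    show a⁻¹ * b * (c * a⁻¹ * b)⁻¹ * c ∈ F
    refine modF h1 F.one_mem ?_
    apply Additive.ofMul.injective
    simp only [map_mul, map_inv, map_one, ofMul_mul, ofMul_inv, ofMul_one]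
    abel

private lemma faces_mem_Pset (h1 : commutator G ≤ F) (h2 : F ≤ Subgroup.center G) :
    ∀ x ∈ Qset F, ∀ (i : Fin 3) (b : Bool), face x i b ∈ Pset F := by
  have hbase : ∀ y ∈ Qset F, face y 0 false ∈ Pset F := by
    intro y hy
    obtain ⟨-, -, hg, -⟩ := hy
    show (y (vt false false false))⁻¹ * y (vt false false true) *
      (y (vt false true true))⁻¹ * y (vt false true false) ∈ F
    refine modF h1 (inv_mem hg) ?_
    apply Additive.ofMul.injective
    simp only [map_mul, map_inv, map_one, ofMul_mul, ofMul_inv, ofMul_one]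
    abel
  intro x hx i b
  fin_cases i <;> cases b
  · exact hbase x hx
  · exact hbase _ (transOK_Fl0 h2 x hx)
  · exact hbase _ (transOK_A01 h1 h2 x hx)
  · exact hbase _ (transOK_comp (transOK_A01 h1 h2) (transOK_Fl1 h1 h2) x hx)
  · exact hbase _ (transOK_comp (transOK_A01 h1 h2) (transOK_A12 h1 h2) x hx)
  · exact hbase _ (transOK_comp (transOK_comp (transOK_A01 h1 h2) (transOK_A12 h1 h2))
      (transOK_Fl2 h1 h2) x hx)

end AuxStatement11j

section AuxStatement11k

variable {G : Type} [Group G] {F : Subgroup G}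

private lemma join_self_mem (h1 : commutator G ≤ F) :
    ∀ p ∈ Pset F, joinQuad p p ∈ Qset F := by
  rintro ⟨a, b, c, d⟩ hp
  have hk : a⁻¹ * b * d⁻¹ * c ∈ F := hp
  refine ⟨?_, ?_, ?_, ?_⟩
  · show c⁻¹ * a * a⁻¹ * c ∈ F
    refine modF h1 F.one_mem ?_
    apply Additive.ofMul.injective
    simp only [map_mul, map_inv, map_one, ofMul_mul, ofMul_inv, ofMul_one]
    abel
  · show b⁻¹ * a * a⁻¹ * b ∈ F
    refine modF h1 F.one_mem ?_
    apply Additive.ofMul.injective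
    simp only [map_mul, map_inv, map_one, ofMul_mul, ofMul_inv, ofMul_one]
    abel
  · show b⁻¹ * a * c⁻¹ * d ∈ F
    refine modF h1 (inv_mem hk) ?_
    apply Additive.ofMul.injective
    simp only [map_mul, map_inv, map_one, ofMul_mul, ofMul_inv, ofMul_one]
    abel
  · show d = c * c⁻¹ * d * b⁻¹ * a * a⁻¹ * b
    group

private lemma join_symm_mem (h1 : commutator G ≤ F) :
    ∀ p q : Quad G, joinQuad p q ∈ Qset F → joinQuad q p ∈ Qset F := by
  rintro ⟨a, b, c, d⟩ ⟨a', b', c', d'⟩ hpq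
  obtain ⟨he, hf, hg, hH⟩ := hpq
  have he' : c⁻¹ * a * a'⁻¹ * c' ∈ F := he
  have hf' : b⁻¹ * a * a'⁻¹ * b' ∈ F := hf
  have hg' : b⁻¹ * a * c⁻¹ * d ∈ F := hg
  have hH' : d' = c' * c⁻¹ * d * b⁻¹ * a * a'⁻¹ * b' := hH
  refine ⟨?_, ?_, ?_, ?_⟩
  · show c'⁻¹ * a' * a⁻¹ * c ∈ F
    refine modF h1 (inv_mem he') ?_
    apply Additive.ofMul.injective
    simp only [map_mul, map_inv, map_one, ofMul_mul, ofMul_inv, ofMul_one]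
    abel
  · show b'⁻¹ * a' * a⁻¹ * b ∈ F
    refine modF h1 (inv_mem hf') ?_
    apply Additive.ofMul.injective
    simp only [map_mul, map_inv, map_one, ofMul_mul, ofMul_inv, ofMul_one]
    abel
  · show b'⁻¹ * a' * c'⁻¹ * d' ∈ F
    rw [hH']
    refine modF h1 hg' ?_
    apply Additive.ofMul.injective
    simp only [map_mul, map_inv, map_one, ofMul_mul, ofMul_inv, ofMul_one]
    abel
  · show d = c * c'⁻¹ * d' * b'⁻¹ * a' * a⁻¹ * b
    rw [hH']
    group

private lemma join_trans_mem (h1 : commutator G ≤ F) :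
    ∀ p q r : Quad G, joinQuad p q ∈ Qset F → joinQuad q r ∈ Qset F →
      joinQuad p r ∈ Qset F := by
  rintro ⟨a, b, c, d⟩ ⟨a', b', c', d'⟩ ⟨a'', b'', c'', d''⟩ hpq hqr
  obtain ⟨he, hf, hg, hH⟩ := hpq
  obtain ⟨he2, hf2, hg2, hH2⟩ := hqr
  have he' : c⁻¹ * a * a'⁻¹ * c' ∈ F := he
  have hf' : b⁻¹ * a * a'⁻¹ * b' ∈ F := hf
  have hg' : b⁻¹ * a * c⁻¹ * d ∈ F := hg
  have hH' : d' = c' * c⁻¹ * d * b⁻¹ * a * a'⁻¹ * b' := hH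
  have he2' : c'⁻¹ * a' * a''⁻¹ * c'' ∈ F := he2
  have hf2' : b'⁻¹ * a' * a''⁻¹ * b'' ∈ F := hf2
  have hH2' : d'' = c'' * c'⁻¹ * d' * b'⁻¹ * a' * a''⁻¹ * b'' := hH2
  refine ⟨?_, ?_, ?_, ?_⟩
  · show c⁻¹ * a * a''⁻¹ * c'' ∈ F
    refine modF h1 (mul_mem he' he2') ?_
    apply Additive.ofMul.injective
    simp only [map_mul, map_inv, map_one, ofMul_mul, ofMul_inv, ofMul_one]
    abel
  · show b⁻¹ * a * a''⁻¹ * b'' ∈ F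
    refine modF h1 (mul_mem hf' hf2') ?_
    apply Additive.ofMul.injective
    simp only [map_mul, map_inv, map_one, ofMul_mul, ofMul_inv, ofMul_one]
    abel
  · exact hg
  · show d'' = c'' * c⁻¹ * d * b⁻¹ * a * a''⁻¹ * b''
    rw [hH2', hH']
    group

private lemma completion_Qset (h1 : commutator G ≤ F) :
    ∀ x000 x001 x010 x011 x100 x101 x110 : G,
      (x000, x001, x010, x011) ∈ Pset F → (x000, x010, x100, x110) ∈ Pset F →
      (x000, x001, x100, x101) ∈ Pset F →
      joinQuad (x000, x001, x010, x011)
        (x100, x101, x110, x110 * x010⁻¹ * x011 * x001⁻¹ * x000 * x100⁻¹ * x101) ∈ Qset F := by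
  intro x000 x001 x010 x011 x100 x101 x110 hg hp he
  have hk1 : x000⁻¹ * x001 * x011⁻¹ * x010 ∈ F := hg
  have hk2 : x000⁻¹ * x010 * x110⁻¹ * x100 ∈ F := hp
  have hk3 : x000⁻¹ * x001 * x101⁻¹ * x100 ∈ F := he
  refine ⟨?_, ?_, ?_, ?_⟩
  · show x010⁻¹ * x000 * x100⁻¹ * x110 ∈ F
    refine modF h1 (inv_mem hk2) ?_
    apply Additive.ofMul.injective
    simp only [map_mul, map_inv, map_one, ofMul_mul, ofMul_inv, ofMul_one]
    abel
  · show x001⁻¹ * x000 * x100⁻¹ * x101 ∈ F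
    refine modF h1 (inv_mem hk3) ?_
    apply Additive.ofMul.injective
    simp only [map_mul, map_inv, map_one, ofMul_mul, ofMul_inv, ofMul_one]
    abel
  · show x001⁻¹ * x000 * x010⁻¹ * x011 ∈ F
    refine modF h1 (inv_mem hk1) ?_
    apply Additive.ofMul.injective
    simp only [map_mul, map_inv, map_one, ofMul_mul, ofMul_inv, ofMul_one]
    abel
  · show x110 * x010⁻¹ * x011 * x001⁻¹ * x000 * x100⁻¹ * x101 =
      x110 * x010⁻¹ * x011 * x001⁻¹ * x000 * x100⁻¹ * x101
    rfl

end AuxStatement11k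

/-- If `F` is a subgroup of `G` with `G₂ ⊆ F ⊆ Z(G)`, then
`(G^{[2,1]}·F^{[2]}, G^{[3,2]}·F^{[3,1]})` is a strong parallelepiped structure on `G`. -/
theorem group_parallelepiped_with_subgroup (G : Type) [Group G] (F : Subgroup G)
    (h1 : commutator G ≤ F) (h2 : F ≤ Subgroup.center G) :
    IsStrongParallelepiped
      ((edgeGroup2 G : Set (Quad G)) * (quadSub F : Set (Quad G)))
      ((faceGroup G : Set (Cube G)) * (edgeGroup3 F : Set (Cube G))) := by
  rw [Pprod_eq h1, Qprod_eq h1 h2]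
  refine ⟨⟨Pset_wpg h1, faces_mem_Pset h1 h2, ?_, join_self_mem h1, join_symm_mem h1,
    join_trans_mem h1, ?_⟩, ?_⟩
  · intro σ c x hx
    exact transOK_cubeSym h1 h2 σ c x hx
  · intro x000 x001 x010 x011 x100 x101 x110 hA hB hC
    exact ⟨_, completion_Qset h1 x000 x001 x010 x011 x100 x101 x110 hA hB hC⟩
  · intro x000 x001 x010 x011 x100 x101 x110 hA hB hC
    refine ⟨x110 * x010⁻¹ * x011 * x001⁻¹ * x000 * x100⁻¹ * x101,
      completion_Qset h1 _ _ _ _ _ _ _ hA hB hC, ?_⟩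
    intro y hy
    exact hy.2.2.2

end HK
end

section
/- Let G be a group, F a subgroup with G₂ ⊆ F ⊆ Z(G), and Γ a subgroup of G with Γ ∩ F = {1}. Let X = G/Γ be the coset space with projection π: G → X, and set 𝒫_X = π^{[2]}(G^{[2,1]}·F^{[2]}) and 𝒬_X = π^{[3]}(G^{[3,2]}·F^{[3,1]}), where π^{[2]} and π^{[3]} apply π coordinatewise. Then (𝒫_X,𝒬_X) is a strong parallelepiped structure on X. -/
open scoped Pointwise

namespace HK

variable {X Y : Type}

/-!
Since `G₂ ≤ F ≤ Z(G)`, the group `𝒫_G = G^{[2,1]} F^{[2]}` consists of the quadruples `t` with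
`t₀₁⁻¹ t₀₀ t₁₀⁻¹ t₁₁ ∈ F`, and a cube `(p, q)` (bottom face `p`, top face `q`) lies in
`𝒬_G = G^{[3,2]} F^{[3,1]}` iff `p ∈ 𝒫_G` and `q p⁻¹ ∈ V := Δ(G) F^{[2,1]}`. The cubes of this
form are a group because `𝒫_G` normalizes `V`: for fixed `e`, `x ↦ ⁅x, e⁆` is a homomorphism
into the center that kills `F`, so conjugating `e` by the four vertices of a parallelogram is an
affine operation. Every `r ∈ V` satisfies `r₁₁ = r₀₁ r₀₀⁻¹ r₁₀`, so the eighth vertex of a cube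
in `𝒬_G` is a word in the other seven; hence it is determined modulo any subgroup `Γ`, which is
the strong property, while its existence comes from an explicit choice of `r`. The other axioms
pass from `𝒫_G`, `𝒬_G` to their images in `G ⧸ Γ` because these are subgroups.
-/

open scoped commutatorElement

section TwoStepNilpotent

variable {G : Type} [Group G] {F : Subgroup G}

lemma conj_eq_self_of_mem_center {z : G} (hz : z ∈ Subgroup.center G) (g : G) :
    g * z * g⁻¹ = z := by
  rw [Subgroup.mem_center_iff.mp hz g]
  group

lemma normal_of_le_center {N : Subgroup G} (h : N ≤ Subgroup.center G) : N.Normal :=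
  ⟨fun n hn g => by rwa [conj_eq_self_of_mem_center (h hn) g]⟩

lemma mem_quadSub_iff {t : Quad G} :
    t ∈ quadSub F ↔ t.1 ∈ F ∧ t.2.1 ∈ F ∧ t.2.2.1 ∈ F ∧ t.2.2.2 ∈ F := by
  simp [quadSub, Subgroup.mem_prod]

lemma quadSub_le_center (h2 : F ≤ Subgroup.center G) :
    quadSub F ≤ Subgroup.center (Quad G) := by
  intro t ht
  obtain ⟨ht1, ht2, ht3, ht4⟩ := mem_quadSub_iff.mp ht
  refine Subgroup.mem_center_iff.mpr fun s => ?_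
  ext <;> simp only [Prod.fst_mul, Prod.snd_mul]
  · exact Subgroup.mem_center_iff.mp (h2 ht1) _
  · exact Subgroup.mem_center_iff.mp (h2 ht2) _
  · exact Subgroup.mem_center_iff.mp (h2 ht3) _
  · exact Subgroup.mem_center_iff.mp (h2 ht4) _

-- Reduction modulo `F`, through `G^{ab}` so that the target is a `CommGroup`.
def quotAb (F : Subgroup G) : G →* Abelianization G ⧸ F.map Abelianization.of :=
  (QuotientGroup.mk' _).comp Abelianization.of

lemma quotAb_eq_one_iff (h1 : commutator G ≤ F) {g : G} : quotAb F g = 1 ↔ g ∈ F := by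
  refine ⟨fun h => ?_, fun hg => (QuotientGroup.eq_one_iff _).mpr ⟨g, hg, rfl⟩⟩
  obtain ⟨f, hf, hfg⟩ := (QuotientGroup.eq_one_iff _).mp h
  have hc : f⁻¹ * g ∈ commutator G := by
    rw [← Abelianization.ker_of, MonoidHom.mem_ker, map_mul, map_inv, hfg, inv_mul_cancel]
  simpa using F.mul_mem hf (h1 hc)

lemma mem_iff_of_quotAb_eq (h1 : commutator G ≤ F) {x y : G} (h : quotAb F x = quotAb F y) :
    x ∈ F ↔ y ∈ F := by
  rw [← quotAb_eq_one_iff h1, ← quotAb_eq_one_iff h1, h]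

lemma commutatorElement_mem (h1 : commutator G ≤ F) (x y : G) : ⁅x, y⁆ ∈ F :=
  h1 (Subgroup.commutator_mem_commutator (Subgroup.mem_top x) (Subgroup.mem_top y))

def commutatorHom (h1 : commutator G ≤ F) (h2 : F ≤ Subgroup.center G) (e : G) :
    G →* Subgroup.center G where
  toFun x := ⟨⁅x, e⁆, h2 (commutatorElement_mem h1 x e)⟩
  map_one' := by ext; simp
  map_mul' x y := by
    have hy := h2 (commutatorElement_mem h1 y e)
    ext
    simp only [Subgroup.coe_mul, commutatorElement_mul_left_eq_conj_mul,
      conj_eq_self_of_mem_center hy]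
    exact (Subgroup.mem_center_iff.mp hy _).symm

lemma conj_eq_commutatorHom_mul (h1 : commutator G ≤ F) (h2 : F ≤ Subgroup.center G)
    (x e : G) : x * e * x⁻¹ = commutatorHom h1 h2 e x * e := by
  simp [commutatorHom, commutatorElement_def]

lemma commutatorHom_eq_one (h1 : commutator G ≤ F) (h2 : F ≤ Subgroup.center G)
    {f : G} (hf : f ∈ F) (e : G) : commutatorHom h1 h2 e f = 1 := by
  ext
  simp only [commutatorHom, MonoidHom.coe_mk, OneHom.coe_mk, commutatorElement_def,
    ← Subgroup.mem_center_iff.mp (h2 hf) e]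
  simp

end TwoStepNilpotent

section Parallelograms

variable {G : Type} [Group G] {F : Subgroup G}

def pgramDefect (t : Quad G) : G := t.2.1⁻¹ * t.1 * t.2.2.1⁻¹ * t.2.2.2

abbrev parallelogramGroup (F : Subgroup G) : Subgroup (Quad G) := edgeGroup2 G ⊔ quadSub F

def pgramDefectHom (F : Subgroup G) :
    Quad G →* Abelianization G ⧸ F.map Abelianization.of where
  toFun t := quotAb F (pgramDefect t)
  map_one' := by simp [pgramDefect]
  map_mul' s t := by
    simp only [pgramDefect, Prod.fst_mul, Prod.snd_mul, map_mul, map_inv, mul_inv]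
    ac_rfl

theorem mem_parallelogramGroup_iff (h1 : commutator G ≤ F) {t : Quad G} :
    t ∈ parallelogramGroup F ↔ pgramDefect t ∈ F := by
  constructor
  · have hle : parallelogramGroup F ≤ (pgramDefectHom F).ker := by
      refine sup_le ((Subgroup.closure_le _).mpr ?_) fun q hq => ?_
      · rintro _ ⟨g, rfl | rfl | rfl⟩ <;> simp [pgramDefectHom, pgramDefect]
      · obtain ⟨ha, hb, hc, hd⟩ := mem_quadSub_iff.mp hq
        rw [MonoidHom.mem_ker, pgramDefectHom, MonoidHom.coe_mk, OneHom.coe_mk,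
          quotAb_eq_one_iff h1]
        exact F.mul_mem (F.mul_mem (F.mul_mem (F.inv_mem hb) ha) (F.inv_mem hc)) hd
    exact fun ht => (quotAb_eq_one_iff h1).mp (hle ht)
  · intro ht
    obtain ⟨a, b, c, d⟩ := t
    -- `(a, b, c, z)` is a product of generators of `G^{[2,1]}`, and `(a, b, c, d)` differs
    -- from it by the defect in the last coordinate.
    set z := c * a⁻¹ * b
    have hdecomp : (a, b, c, d) = (b * z⁻¹, b * z⁻¹, 1, 1) * (c * z⁻¹, 1, c * z⁻¹, 1) *
        (z, z, z, z) * (1, 1, 1, pgramDefect (a, b, c, d)) := by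
      simp only [Prod.mk_mul_mk, pgramDefect, z]
      ext <;> simp only <;> group
    have hgen : ∀ q ∈ {q : Quad G | ∃ g : G, q = (g, g, 1, 1) ∨ q = (g, 1, g, 1) ∨
        q = (g, g, g, g)}, q ∈ parallelogramGroup F :=
      fun q hq => Subgroup.mem_sup_left (Subgroup.subset_closure hq)
    rw [hdecomp]
    refine Subgroup.mul_mem _ (Subgroup.mul_mem _ (Subgroup.mul_mem _
      (hgen _ ⟨_, Or.inl rfl⟩) (hgen _ ⟨_, Or.inr (Or.inl rfl)⟩))
      (hgen _ ⟨_, Or.inr (Or.inr rfl)⟩)) (Subgroup.mem_sup_right ?_)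
    exact mem_quadSub_iff.mpr ⟨F.one_mem, F.one_mem, F.one_mem, ht⟩

lemma refl_mem_parallelogramGroup (h1 : commutator G ≤ F) (g h : G) :
    (g, h, g, h) ∈ parallelogramGroup F := by
  rw [mem_parallelogramGroup_iff h1, pgramDefect]
  simp [F.one_mem]

lemma complete_mem_parallelogramGroup (h1 : commutator G ≤ F) (g h k : G) :
    (g, h, k, k * g⁻¹ * h) ∈ parallelogramGroup F := by
  rw [mem_parallelogramGroup_iff h1, pgramDefect]
  simp [mul_assoc, F.one_mem]

lemma midSwap_mem_parallelogramGroup (h1 : commutator G ≤ F) {t : Quad G}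
    (ht : t ∈ parallelogramGroup F) : (t.1, t.2.2.1, t.2.1, t.2.2.2) ∈ parallelogramGroup F := by
  rw [mem_parallelogramGroup_iff h1] at ht ⊢
  refine (mem_iff_of_quotAb_eq h1 ?_).mpr ht
  simp only [pgramDefect, map_mul, map_inv]
  apply Additive.ofMul.injective
  simp only [ofMul_mul, ofMul_inv]
  abel

open scoped IsMulCommutative in
theorem conj_affine (h1 : commutator G ≤ F) (h2 : F ≤ Subgroup.center G) {t : Quad G}
    (ht : pgramDefect t ∈ F) (e : G) :
    t.2.2.2 * e * t.2.2.2⁻¹ =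
      t.2.1 * e * t.2.1⁻¹ * (t.1 * e * t.1⁻¹)⁻¹ * (t.2.2.1 * e * t.2.2.1⁻¹) := by
  have h4 : commutatorHom h1 h2 e t.2.2.2 =
      commutatorHom h1 h2 e t.2.1 * (commutatorHom h1 h2 e t.1)⁻¹ *
        commutatorHom h1 h2 e t.2.2.1 := by
    have ht4 : t.2.2.2 = t.2.2.1 * t.1⁻¹ * t.2.1 * pgramDefect t := by
      simp only [pgramDefect]; group
    rw [ht4, map_mul, map_mul, map_mul, map_inv, commutatorHom_eq_one h1 h2 ht, mul_one,
      mul_right_comm, mul_comm (commutatorHom h1 h2 e t.2.2.1), mul_right_comm]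
  simp only [conj_eq_commutatorHom_mul h1 h2 _ e]
  rw [h4, Subgroup.coe_mul, Subgroup.coe_mul, Subgroup.coe_inv]
  group

end Parallelograms

section Displacements

variable {G : Type} [Group G] {F : Subgroup G}

def displacementHom (h2 : F ≤ Subgroup.center G) : G × F × F →* Quad G where
  toFun x := (x.1, x.1 * x.2.1, x.1 * x.2.2, x.1 * x.2.1 * x.2.2)
  map_one' := by simp
  map_mul' := by
    rintro ⟨e, a, c⟩ ⟨e', a', c'⟩
    have ha : ∀ g : G, (a : G) * g = g * a :=
      fun g => (Subgroup.mem_center_iff.mp (h2 a.2) g).symm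
    have hc : ∀ g : G, (c : G) * g = g * c :=
      fun g => (Subgroup.mem_center_iff.mp (h2 c.2) g).symm
    simp only [Prod.mk_mul_mk, Subgroup.coe_mul]
    refine Prod.ext rfl (Prod.ext ?_ (Prod.ext ?_ ?_)) <;> simp only [mul_assoc, ha] <;>
      simp only [mul_assoc, hc]

-- `V = Δ(G) F^{[2,1]}`
def displacementGroup (h2 : F ≤ Subgroup.center G) : Subgroup (Quad G) := (displacementHom h2).range

theorem mem_displacementGroup_iff (h2 : F ≤ Subgroup.center G) {r : Quad G} :
    r ∈ displacementGroup h2 ↔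
      r.1⁻¹ * r.2.1 ∈ F ∧ r.1⁻¹ * r.2.2.1 ∈ F ∧ r.2.2.2 = r.2.1 * r.1⁻¹ * r.2.2.1 := by
  constructor
  · rintro ⟨⟨e, a, c⟩, rfl⟩
    simp [displacementHom, mul_assoc]
  · rintro ⟨ha, hc, hd⟩
    refine ⟨(r.1, ⟨_, ha⟩, ⟨_, hc⟩), ?_⟩
    obtain ⟨r1, r2, r3, r4⟩ := r
    simp only at hd
    simp only [displacementHom, MonoidHom.coe_mk, OneHom.coe_mk, hd]
    ext <;> simp only <;> group

theorem conj_mem_displacementGroup (h1 : commutator G ≤ F) (h2 : F ≤ Subgroup.center G)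
    {t r : Quad G} (ht : t ∈ parallelogramGroup F) (hr : r ∈ displacementGroup h2) :
    t * r * t⁻¹ ∈ displacementGroup h2 := by
  obtain ⟨⟨e, a, c⟩, rfl⟩ := hr
  have hsplit : displacementHom h2 (e, a, c) = (e, e, e, e) * displacementHom h2 (1, a, c) := by
    simp [displacementHom, mul_assoc]
  have hcentral : t * displacementHom h2 (1, a, c) * t⁻¹ = displacementHom h2 (1, a, c) := by
    refine conj_eq_self_of_mem_center (quadSub_le_center h2 (mem_quadSub_iff.mpr ?_)) t
    simp only [displacementHom, MonoidHom.coe_mk, OneHom.coe_mk, one_mul]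
    exact ⟨F.one_mem, a.2, c.2, F.mul_mem a.2 c.2⟩
  have hdiag : t * (e, e, e, e) * t⁻¹ ∈ displacementGroup h2 := by
    rw [mem_parallelogramGroup_iff h1] at ht
    refine (mem_displacementGroup_iff h2).mpr ⟨?_, ?_, conj_affine h1 h2 ht e⟩ <;>
    · refine (mem_iff_of_quotAb_eq h1 (y := 1) ?_).mpr F.one_mem
      simp only [Prod.fst_mul, Prod.snd_mul, Prod.fst_inv, Prod.snd_inv, map_mul, map_inv,
        map_one]
      apply Additive.ofMul.injective
      simp only [ofMul_mul, ofMul_inv, ofMul_one]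
      abel
  rw [hsplit, show t * ((e, e, e, e) * displacementHom h2 (1, a, c)) * t⁻¹ =
      t * (e, e, e, e) * t⁻¹ * (t * displacementHom h2 (1, a, c) * t⁻¹) by group, hcentral]
  exact (displacementGroup h2).mul_mem hdiag ⟨_, rfl⟩

end Displacements

section CubeMaps

variable {X Y : Type}

lemma cube_ext {x y : Cube X} (h : ∀ a b c : Bool, x ![a, b, c] = y ![a, b, c]) : x = y := by
  funext v
  rw [show v = ![v 0, v 1, v 2] by funext j; fin_cases j <;> rfl]
  exact h _ _ _

lemma face_joinQuad_false (p q : Quad X) : face (joinQuad p q) 0 false = p := rfl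

lemma face_joinQuad_true (p q : Quad X) : face (joinQuad p q) 0 true = q := rfl

lemma joinQuad_face (x : Cube X) : joinQuad (face x 0 false) (face x 0 true) = x :=
  cube_ext fun a b c => by cases a <;> cases b <;> cases c <;> rfl

lemma joinQuad_comp_flip (p q : Quad X) :
    (fun v => joinQuad p q (cubeSym 1 ![true, false, false] v)) = joinQuad q p :=
  cube_ext fun a b c => by cases a <;> cases b <;> cases c <;> rfl

lemma mapCube_joinQuad (f : X → Y) (p q : Quad X) :
    mapCube f (joinQuad p q) = joinQuad (map4 f p) (map4 f q) :=
  cube_ext fun a b c => by cases a <;> cases b <;> cases c <;> rfl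

lemma face_mapCube (f : X → Y) (x : Cube X) (i : Fin 3) (b : Bool) :
    face (mapCube f x) i b = map4 f (face x i b) := rfl

variable {G : Type} [Group G]

def faceHom (i : Fin 3) (b : Bool) : Cube G →* Quad G where
  toFun x := face x i b
  map_one' := rfl
  map_mul' _ _ := rfl

def precompHom (ρ : Vtx → Vtx) : Cube G →* Cube G where
  toFun x v := x (ρ v)
  map_one' := rfl
  map_mul' _ _ := rfl

def joinHom : Quad G × Quad G →* Cube G where
  toFun x := joinQuad x.1 x.2
  map_one' := cube_ext fun a b c => by cases a <;> cases b <;> cases c <;> rfl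
  map_mul' _ _ := cube_ext fun a b c => by cases a <;> cases b <;> cases c <;> rfl

def joinSelfHom : Quad G →* Cube G where
  toFun p := joinQuad p p
  map_one' := joinHom.map_one
  map_mul' p q := joinHom.map_mul (p, p) (q, q)

lemma joinSelfHom_apply (p : Quad G) : joinSelfHom p = joinQuad p p := rfl

end CubeMaps

section Parallelepipeds

variable {G : Type} [Group G] {F : Subgroup G}

noncomputable abbrev parallelepipedGroup (F : Subgroup G) : Subgroup (Cube G) :=
  faceGroup G ⊔ edgeGroup3 F

lemma cubeElt_mem {u : G} (hu : u ∈ F) (α : Set Vtx) (v : Vtx) : cubeElt α u v ∈ F := by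
  unfold cubeElt
  split
  · exact hu
  · exact F.one_mem

lemma cubeElt_face_mem (g : G) (i : Fin 3) (b : Bool) :
    cubeElt {v | v i = b} g ∈ parallelepipedGroup F :=
  Subgroup.mem_sup_left (Subgroup.subset_closure ⟨g, _, ⟨i, b, rfl⟩, rfl⟩)

lemma cubeElt_edge_mem {u : G} (hu : u ∈ F) {i j : Fin 3} (hij : i ≠ j) (b c : Bool) :
    cubeElt {v | v i = b ∧ v j = c} u ∈ parallelepipedGroup F :=
  Subgroup.mem_sup_right (Subgroup.subset_closure ⟨u, hu, _, ⟨i, j, b, c, hij, rfl⟩, rfl⟩)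

lemma parallelepipedGroup_le {K : Subgroup (Cube G)}
    (hface : ∀ (g : G) (i : Fin 3) (b : Bool), cubeElt {v | v i = b} g ∈ K)
    (hedge : ∀ u ∈ F, ∀ i j : Fin 3, i ≠ j → ∀ b c : Bool,
      cubeElt {v | v i = b ∧ v j = c} u ∈ K) :
    parallelepipedGroup F ≤ K := by
  refine sup_le ((Subgroup.closure_le _).mpr ?_) ((Subgroup.closure_le _).mpr ?_)
  · rintro _ ⟨g, _, ⟨i, b, rfl⟩, rfl⟩
    exact hface g i b
  · rintro _ ⟨u, hu, _, ⟨i, j, b, c, hij, rfl⟩, rfl⟩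
    exact hedge u hu i j hij b c

lemma edgeGroup3_le_center (h2 : F ≤ Subgroup.center G) :
    edgeGroup3 F ≤ Subgroup.center (Cube G) := by
  refine (Subgroup.closure_le _).mpr ?_
  rintro _ ⟨u, hu, α, -, rfl⟩
  refine Subgroup.mem_center_iff.mpr fun y => funext fun v => ?_
  exact Subgroup.mem_center_iff.mp (h2 (cubeElt_mem hu α v)) (y v)

theorem face_mem_parallelogramGroup (h1 : commutator G ≤ F) {x : Cube G}
    (hx : x ∈ parallelepipedGroup F) (i : Fin 3) (b : Bool) :
    face x i b ∈ parallelogramGroup F := by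
  suffices parallelepipedGroup F ≤ (parallelogramGroup F).comap (faceHom i b) from this hx
  refine parallelepipedGroup_le (fun g j c => ?_) (fun u hu j k _ c d => ?_)
  · rw [Subgroup.mem_comap, mem_parallelogramGroup_iff h1]
    suffices pgramDefect (face (cubeElt {v : Vtx | v j = c} g) i b) = 1 from
      this ▸ F.one_mem
    fin_cases i <;> fin_cases j <;> cases b <;> cases c <;>
      simp [pgramDefect, face, insert3, cubeElt]
  · exact Subgroup.mem_sup_right (mem_quadSub_iff.mpr
      ⟨cubeElt_mem hu _ _, cubeElt_mem hu _ _, cubeElt_mem hu _ _, cubeElt_mem hu _ _⟩)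

lemma xor_eq_iff_eq_xor (a b c : Bool) : xor a c = b ↔ a = xor b c := by
  revert a b c; decide

theorem comp_cubeSym_mem (σ : Equiv.Perm (Fin 3)) (c : Vtx) {x : Cube G}
    (hx : x ∈ parallelepipedGroup F) : (fun v => x (cubeSym σ c v)) ∈ parallelepipedGroup F := by
  suffices parallelepipedGroup F ≤ (parallelepipedGroup F).comap (precompHom (cubeSym σ c)) from
    this hx
  refine parallelepipedGroup_le (fun g i b => ?_) (fun u hu i j hij b b' => ?_)
  · have hpre : precompHom (cubeSym σ c) (cubeElt {v | v i = b} g) =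
        cubeElt {v | v (σ i) = xor b (c i)} g := by
      funext v
      simp [precompHom, cubeElt, cubeSym, xor_eq_iff_eq_xor]
    rw [Subgroup.mem_comap, hpre]
    exact cubeElt_face_mem g _ _
  · have hpre : precompHom (cubeSym σ c) (cubeElt {v | v i = b ∧ v j = b'} u) =
        cubeElt {v | v (σ i) = xor b (c i) ∧ v (σ j) = xor b' (c j)} u := by
      funext v
      simp [precompHom, cubeElt, cubeSym, xor_eq_iff_eq_xor]
    rw [Subgroup.mem_comap, hpre]
    exact cubeElt_edge_mem hu (fun h => hij (σ.injective h)) _ _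

theorem joinQuad_self_mem {p : Quad G} (hp : p ∈ parallelogramGroup F) :
    joinQuad p p ∈ parallelepipedGroup F := by
  suffices parallelogramGroup F ≤ (parallelepipedGroup F).comap joinSelfHom from this hp
  refine sup_le ((Subgroup.closure_le _).mpr ?_) fun t ht => ?_
  · rintro _ ⟨g, rfl | rfl | rfl⟩ <;>
      rw [SetLike.mem_coe, Subgroup.mem_comap, joinSelfHom_apply]
    · rw [show joinQuad (g, g, 1, 1) (g, g, 1, 1) = cubeElt {v | v 1 = false} g from
        cube_ext fun a b c => by
          cases a <;> cases b <;> cases c <;> simp [joinQuad, quadAt, cubeElt]]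
      exact cubeElt_face_mem g 1 false
    · rw [show joinQuad (g, 1, g, 1) (g, 1, g, 1) = cubeElt {v | v 2 = false} g from
        cube_ext fun a b c => by
          cases a <;> cases b <;> cases c <;> simp [joinQuad, quadAt, cubeElt]]
      exact cubeElt_face_mem g 2 false
    · rw [show joinQuad (g, g, g, g) (g, g, g, g) =
          cubeElt {v | v 0 = false} g * cubeElt {v | v 0 = true} g from
        cube_ext fun a b c => by
          cases a <;> cases b <;> cases c <;> simp [joinQuad, quadAt, cubeElt]]
      exact Subgroup.mul_mem _ (cubeElt_face_mem g 0 false) (cubeElt_face_mem g 0 true)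
  · obtain ⟨a, b, c, d⟩ := t
    obtain ⟨ha, hb, hc, hd⟩ := mem_quadSub_iff.mp ht
    rw [Subgroup.mem_comap, joinSelfHom_apply, show joinQuad (a, b, c, d) (a, b, c, d) =
        cubeElt {v | v 1 = false ∧ v 2 = false} a * cubeElt {v | v 1 = false ∧ v 2 = true} b *
          cubeElt {v | v 1 = true ∧ v 2 = false} c * cubeElt {v | v 1 = true ∧ v 2 = true} d from
      cube_ext fun a b c => by cases a <;> cases b <;> cases c <;> simp [joinQuad, quadAt, cubeElt]]
    have h12 : (1 : Fin 3) ≠ 2 := by decide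
    exact Subgroup.mul_mem _ (Subgroup.mul_mem _ (Subgroup.mul_mem _
      (cubeElt_edge_mem ha h12 _ _) (cubeElt_edge_mem hb h12 _ _))
      (cubeElt_edge_mem hc h12 _ _)) (cubeElt_edge_mem hd h12 _ _)

theorem joinQuad_one_mem (h2 : F ≤ Subgroup.center G) {r : Quad G} (hr : r ∈ displacementGroup h2) :
    joinQuad 1 r ∈ parallelepipedGroup F := by
  obtain ⟨⟨e, a, c⟩, rfl⟩ := hr
  rw [show joinQuad 1 (displacementHom h2 (e, a, c)) = cubeElt {v | v 0 = true} e *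
      cubeElt {v | v 0 = true ∧ v 2 = true} (a : G) *
        cubeElt {v | v 0 = true ∧ v 1 = true} (c : G) from
    cube_ext fun a b c => by
      cases a <;> cases b <;> cases c <;> simp [joinQuad, quadAt, cubeElt, displacementHom]]
  exact Subgroup.mul_mem _ (Subgroup.mul_mem _ (cubeElt_face_mem e 0 true)
    (cubeElt_edge_mem a.2 (by decide) _ _)) (cubeElt_edge_mem c.2 (by decide) _ _)

def twistedDiagonal {H : Type} [Group H] (P V : Subgroup H)
    (hPV : ∀ t ∈ P, ∀ r ∈ V, t * r * t⁻¹ ∈ V) : Subgroup (H × H) where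
  carrier := {x | x.1 ∈ P ∧ x.2 * x.1⁻¹ ∈ V}
  one_mem' := ⟨P.one_mem, by simp⟩
  mul_mem' := by
    rintro ⟨p, q⟩ ⟨p', q'⟩ ⟨hp, hq⟩ ⟨hp', hq'⟩
    refine ⟨P.mul_mem hp hp', ?_⟩
    rw [Prod.mk_mul_mk, show q * q' * (p * p')⁻¹ = q * p⁻¹ * (p * (q' * p'⁻¹) * p⁻¹) by group]
    exact V.mul_mem hq (hPV p hp _ hq')
  inv_mem' := by
    rintro ⟨p, q⟩ ⟨hp, hq⟩
    refine ⟨P.inv_mem hp, ?_⟩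
    rw [Prod.inv_mk, show q⁻¹ * p⁻¹⁻¹ = p⁻¹ * (q * p⁻¹)⁻¹ * p⁻¹⁻¹ by group]
    exact hPV _ (P.inv_mem hp) _ (V.inv_mem hq)

theorem joinQuad_mem_iff (h1 : commutator G ≤ F) (h2 : F ≤ Subgroup.center G) {p q : Quad G} :
    joinQuad p q ∈ parallelepipedGroup F ↔
      p ∈ parallelogramGroup F ∧ q * p⁻¹ ∈ displacementGroup h2 := by
  constructor
  · intro h
    have hle : parallelepipedGroup F ≤
        (twistedDiagonal (parallelogramGroup F) (displacementGroup h2)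
          fun t ht r hr => conj_mem_displacementGroup h1 h2 ht hr).comap
            ((faceHom 0 false).prod (faceHom 0 true)) := by
      refine parallelepipedGroup_le
        (fun g i b => ⟨face_mem_parallelogramGroup h1 (cubeElt_face_mem g i b) 0 false, ?_⟩)
        (fun u hu i j hij b c =>
          ⟨face_mem_parallelogramGroup h1 (cubeElt_edge_mem hu hij b c) 0 false, ?_⟩)
      · rw [mem_displacementGroup_iff]
        fin_cases i <;> cases b <;> simp [faceHom, face, insert3, cubeElt]
      · rw [mem_displacementGroup_iff]
        fin_cases i <;> fin_cases j <;> cases b <;> cases c <;>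
          simp_all [faceHom, face, insert3, cubeElt]
    exact hle h
  · rintro ⟨hp, hr⟩
    have hsplit : joinQuad p q = joinQuad 1 (q * p⁻¹) * joinQuad p p := by
      change joinHom (p, q) = joinHom (1, q * p⁻¹) * joinHom (p, p)
      rw [← map_mul, Prod.mk_mul_mk, one_mul, inv_mul_cancel_right]
    rw [hsplit]
    exact Subgroup.mul_mem _ (joinQuad_one_mem h2 hr) (joinQuad_self_mem hp)

theorem top_vertex_eq (h1 : commutator G ≤ F) (h2 : F ≤ Subgroup.center G) {p q : Quad G}
    (h : joinQuad p q ∈ parallelepipedGroup F) :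
    q.2.2.2 = q.2.1 * p.2.1⁻¹ * (q.1 * p.1⁻¹)⁻¹ * (q.2.2.1 * p.2.2.1⁻¹) * p.2.2.2 := by
  obtain ⟨-, -, h4⟩ := (mem_displacementGroup_iff h2).mp ((joinQuad_mem_iff h1 h2).mp h).2
  simp only [Prod.fst_mul, Prod.snd_mul, Prod.fst_inv, Prod.snd_inv] at h4
  rw [← h4]
  group

theorem top_vertex_mem (h1 : commutator G ≤ F) (h2 : F ≤ Subgroup.center G) {Γ : Subgroup G}
    {p q : Quad G} (h : joinQuad p q ∈ parallelepipedGroup F) (hp : p ∈ quadSub Γ)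
    (hq1 : q.1 ∈ Γ) (hq2 : q.2.1 ∈ Γ) (hq3 : q.2.2.1 ∈ Γ) : q.2.2.2 ∈ Γ := by
  obtain ⟨hp1, hp2, hp3, hp4⟩ := mem_quadSub_iff.mp hp
  rw [top_vertex_eq h1 h2 h]
  exact Γ.mul_mem (Γ.mul_mem (Γ.mul_mem (Γ.mul_mem hq2 (Γ.inv_mem hp2))
    (Γ.inv_mem (Γ.mul_mem hq1 (Γ.inv_mem hp1)))) (Γ.mul_mem hq3 (Γ.inv_mem hp3))) hp4

-- Each right factor is a quotient of two lifts of the same vertex of the cube in `G ⧸ Γ`.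
theorem exists_top_face (h1 : commutator G ≤ F) (h2 : F ≤ Subgroup.center G) {u k w : Quad G}
    (hu : u ∈ parallelogramGroup F) (hk : k ∈ parallelogramGroup F)
    (hw : w ∈ parallelogramGroup F) :
    ∃ q, joinQuad u q ∈ parallelepipedGroup F ∧ q.1 = k.2.2.1 * (k.1⁻¹ * u.1) ∧
      q.2.1 = k.2.2.2 * (k.2.1⁻¹ * u.2.1) ∧
      q.2.2.1 = w.2.2.2 * (w.2.2.1⁻¹ * k.2.2.1 * (k.1⁻¹ * w.1) * (w.2.1⁻¹ * u.2.2.1)) := by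
  set r1 := k.2.2.1 * k.1⁻¹
  set r2 := k.2.2.2 * k.2.1⁻¹
  set r3 := w.2.2.2 * w.2.2.1⁻¹ * k.2.2.1 * k.1⁻¹ * w.1 * w.2.1⁻¹
  have hr : (r1, r2, r3, r2 * r1⁻¹ * r3) ∈ displacementGroup h2 := by
    rw [mem_parallelogramGroup_iff h1] at hk hw
    refine (mem_displacementGroup_iff h2).mpr ⟨(mem_iff_of_quotAb_eq h1 ?_).mpr hk,
      (mem_iff_of_quotAb_eq h1 ?_).mpr hw, rfl⟩ <;>
    · simp only [pgramDefect, r1, r2, r3, map_mul, map_inv]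
      apply Additive.ofMul.injective
      simp only [ofMul_mul, ofMul_inv]
      abel
  refine ⟨(r1, r2, r3, r2 * r1⁻¹ * r3) * u,
    (joinQuad_mem_iff h1 h2).mpr ⟨hu, by simpa using hr⟩, ?_, ?_, ?_⟩ <;>
    simp only [Prod.fst_mul, Prod.snd_mul, r1, r2, r3] <;> group

end Parallelepipeds

section Quotient

variable {G : Type} [Group G] {Γ : Subgroup G}

lemma mk_mul_inv_mul {a x y : G} (h : (x : G ⧸ Γ) = y) : ((a * x⁻¹ * y : G) : G ⧸ Γ) = a := by
  rw [mul_assoc]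
  exact QuotientGroup.mk_mul_of_mem a (QuotientGroup.eq.mp h)

lemma map4_mk_eq_iff {p q : Quad G} :
    map4 (QuotientGroup.mk : G → G ⧸ Γ) p = map4 QuotientGroup.mk q ↔ p⁻¹ * q ∈ quadSub Γ := by
  simp [map4, mem_quadSub_iff, QuotientGroup.eq]

lemma joinQuad_mem_image_iff {Q : Subgroup (Cube G)} {a b : Quad (G ⧸ Γ)} :
    joinQuad a b ∈ mapCube (QuotientGroup.mk : G → G ⧸ Γ) '' Q ↔
      ∃ p q, joinQuad p q ∈ Q ∧ map4 QuotientGroup.mk p = a ∧ map4 QuotientGroup.mk q = b := by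
  constructor
  · rintro ⟨y, hy, he⟩
    refine ⟨face y 0 false, face y 0 true, by rwa [joinQuad_face], ?_, ?_⟩
    · rw [← face_mapCube, he, face_joinQuad_false]
    · rw [← face_mapCube, he, face_joinQuad_true]
  · rintro ⟨p, q, h, rfl, rfl⟩
    exact ⟨_, h, mapCube_joinQuad _ _ _⟩

theorem isWeakParallelogram_image (P : Subgroup (Quad G))
    (hrefl : ∀ g h : G, (g, h, g, h) ∈ P)
    (hmid : ∀ t ∈ P, (t.1, t.2.2.1, t.2.1, t.2.2.2) ∈ P)
    (hcomplete : ∀ g h k : G, ∃ l, (g, h, k, l) ∈ P) :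
    IsWeakParallelogram (map4 (QuotientGroup.mk : G → G ⧸ Γ) '' P) := by
  refine ⟨fun a b => ?_, ?_, ?_, ?_, fun a b c => ?_⟩
  · obtain ⟨g, rfl⟩ := QuotientGroup.mk_surjective a
    obtain ⟨h, rfl⟩ := QuotientGroup.mk_surjective b
    exact ⟨_, hrefl g h, rfl⟩
  · rintro _ _ _ _ ⟨⟨t1, t2, t3, t4⟩, ht, he⟩
    simp only [map4, Prod.mk.injEq] at he
    obtain ⟨rfl, rfl, rfl, rfl⟩ := he
    have hswap : (t3, t4, t1, t2) = (t3, t4, t3, t4) * (t1, t2, t3, t4)⁻¹ * (t1, t2, t1, t2) := by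
      simp
    exact ⟨_, hswap ▸ P.mul_mem (P.mul_mem (hrefl _ _) (P.inv_mem ht)) (hrefl _ _), rfl⟩
  · rintro _ _ _ _ _ _ ⟨⟨t1, t2, t3, t4⟩, ht, he⟩ ⟨⟨s1, s2, s3, s4⟩, hs, he'⟩
    simp only [map4, Prod.mk.injEq] at he he'
    obtain ⟨rfl, rfl, rfl, rfl⟩ := he
    obtain ⟨h1, h2, rfl, rfl⟩ := he'
    refine ⟨_, P.mul_mem (P.mul_mem ht (P.inv_mem (hrefl t3 t4))) hs, ?_⟩
    simp [map4, mk_mul_inv_mul h1.symm, mk_mul_inv_mul h2.symm]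
  · rintro _ _ _ _ ⟨⟨t1, t2, t3, t4⟩, ht, he⟩
    simp only [map4, Prod.mk.injEq] at he
    obtain ⟨rfl, rfl, rfl, rfl⟩ := he
    exact ⟨_, hmid _ ht, rfl⟩
  · obtain ⟨g, rfl⟩ := QuotientGroup.mk_surjective a
    obtain ⟨h, rfl⟩ := QuotientGroup.mk_surjective b
    obtain ⟨k, rfl⟩ := QuotientGroup.mk_surjective c
    obtain ⟨l, hl⟩ := hcomplete g h k
    exact ⟨_, _, hl, rfl⟩

variable {P : Subgroup (Quad G)} {Q : Subgroup (Cube G)}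

theorem face_mem_image (hface : ∀ x ∈ Q, ∀ i b, face x i b ∈ P) :
    ∀ x ∈ mapCube (QuotientGroup.mk : G → G ⧸ Γ) '' Q, ∀ i b,
      face x i b ∈ map4 (QuotientGroup.mk : G → G ⧸ Γ) '' P := by
  rintro _ ⟨y, hy, rfl⟩ i b
  exact ⟨_, hface y hy i b, rfl⟩

theorem cubeSym_mem_image (hsym : ∀ σ c, ∀ x ∈ Q, (fun v => x (cubeSym σ c v)) ∈ Q) :
    ∀ σ c, ∀ x ∈ mapCube (QuotientGroup.mk : G → G ⧸ Γ) '' Q,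
      (fun v => x (cubeSym σ c v)) ∈ mapCube (QuotientGroup.mk : G → G ⧸ Γ) '' Q := by
  rintro σ c _ ⟨y, hy, rfl⟩
  exact ⟨_, hsym σ c y hy, rfl⟩

theorem joinQuad_self_mem_image (hjoin : ∀ p ∈ P, joinQuad p p ∈ Q) :
    ∀ p ∈ map4 (QuotientGroup.mk : G → G ⧸ Γ) '' P,
      joinQuad p p ∈ mapCube (QuotientGroup.mk : G → G ⧸ Γ) '' Q := by
  rintro _ ⟨t, ht, rfl⟩
  exact ⟨_, hjoin t ht, mapCube_joinQuad _ _ _⟩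

theorem joinQuad_symm_image (hsym : ∀ σ c, ∀ x ∈ Q, (fun v => x (cubeSym σ c v)) ∈ Q)
    (p q : Quad (G ⧸ Γ)) (h : joinQuad p q ∈ mapCube QuotientGroup.mk '' Q) :
    joinQuad q p ∈ mapCube (QuotientGroup.mk : G → G ⧸ Γ) '' Q := by
  rw [← joinQuad_comp_flip]
  exact cubeSym_mem_image hsym _ _ _ h

theorem joinQuad_trans_image (hface : ∀ x ∈ Q, ∀ i b, face x i b ∈ P)
    (hjoin : ∀ p ∈ P, joinQuad p p ∈ Q) (p q r : Quad (G ⧸ Γ))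
    (hpq : joinQuad p q ∈ mapCube QuotientGroup.mk '' Q)
    (hqr : joinQuad q r ∈ mapCube QuotientGroup.mk '' Q) :
    joinQuad p r ∈ mapCube (QuotientGroup.mk : G → G ⧸ Γ) '' Q := by
  rw [joinQuad_mem_image_iff] at hpq hqr ⊢
  obtain ⟨p', q', hpq', rfl, rfl⟩ := hpq
  obtain ⟨q'', r', hqr', hq, rfl⟩ := hqr
  have hq' : q' ∈ P := face_joinQuad_true p' q' ▸ hface _ hpq' 0 true
  refine ⟨p' * q'⁻¹ * q'', r', ?_, ?_, rfl⟩
  · rw [show joinQuad (p' * q'⁻¹ * q'') r' =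
        joinQuad p' q' * (joinQuad q' q')⁻¹ * joinQuad q'' r' by
      change joinHom (p' * q'⁻¹ * q'', r') =
        joinHom (p', q') * (joinHom (q', q'))⁻¹ * joinHom (q'', r')
      rw [← map_inv, ← map_mul, ← map_mul]
      simp]
    exact Q.mul_mem (Q.mul_mem hpq' (Q.inv_mem (hjoin q' hq'))) hqr'
  · rw [map4_mk_eq_iff] at hq ⊢
    rwa [show (p' * q'⁻¹ * q'')⁻¹ * p' = q''⁻¹ * q' by group]

variable {F : Subgroup G}

theorem existsUnique_top (h1 : commutator G ≤ F) (h2 : F ≤ Subgroup.center G)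
    {x000 x001 x010 x011 x100 x101 x110 : G ⧸ Γ}
    (hA : (x000, x001, x010, x011) ∈ map4 QuotientGroup.mk '' (parallelogramGroup F : Set _))
    (hB : (x000, x010, x100, x110) ∈ map4 QuotientGroup.mk '' (parallelogramGroup F : Set _))
    (hC : (x000, x001, x100, x101) ∈ map4 QuotientGroup.mk '' (parallelogramGroup F : Set _)) :
    ∃! x111, joinQuad (x000, x001, x010, x011) (x100, x101, x110, x111) ∈
      mapCube QuotientGroup.mk '' (parallelepipedGroup F : Set (Cube G)) := by
  obtain ⟨u, hu, hu'⟩ := hA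
  obtain ⟨w, hw, hw'⟩ := hB
  obtain ⟨k, hk, hk'⟩ := hC
  simp only [map4, Prod.mk.injEq] at hu' hw' hk'
  obtain ⟨rfl, rfl, rfl, rfl⟩ := hu'
  obtain ⟨hw1, hw2, rfl, rfl⟩ := hw'
  obtain ⟨hk1, hk2, hk3, rfl⟩ := hk'
  obtain ⟨q, hq, hq1, hq2, hq3⟩ := exists_top_face h1 h2 hu hk hw
  have hqX : map4 QuotientGroup.mk q =
      ((w.2.2.1 : G ⧸ Γ), (k.2.2.2 : G ⧸ Γ), (w.2.2.2 : G ⧸ Γ), (q.2.2.2 : G ⧸ Γ)) := by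
    simp only [map4, hq1, hq2, hq3, Prod.mk.injEq, and_true]
    refine ⟨?_, QuotientGroup.mk_mul_of_mem _ (QuotientGroup.eq.mp hk2),
      QuotientGroup.mk_mul_of_mem _ (Γ.mul_mem (Γ.mul_mem ?_ ?_) (QuotientGroup.eq.mp hw2))⟩
    · rw [QuotientGroup.mk_mul_of_mem _ (QuotientGroup.eq.mp hk1), hk3]
    · exact QuotientGroup.eq.mp hk3.symm
    · exact QuotientGroup.eq.mp (hk1.trans hw1.symm)
  refine ⟨q.2.2.2, joinQuad_mem_image_iff.mpr ⟨u, q, hq, rfl, hqX⟩, fun y hy => ?_⟩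
  obtain ⟨p', q', hpq', hp', hq'⟩ := joinQuad_mem_image_iff.mp hy
  have hz : joinQuad (u⁻¹ * p') (q⁻¹ * q') ∈ parallelepipedGroup F := by
    change joinHom (u⁻¹ * p', q⁻¹ * q') ∈ _
    rw [← Prod.mk_mul_mk, ← Prod.inv_mk, map_mul, map_inv]
    exact Subgroup.mul_mem _ (Subgroup.inv_mem _ hq) hpq'
  simp only [map4, Prod.mk.injEq] at hqX hq'
  have h4 := top_vertex_mem h1 h2 hz ((map4_mk_eq_iff (p := u)).mp hp'.symm)
    (QuotientGroup.eq.mp (hqX.1.trans hq'.1.symm))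
    (QuotientGroup.eq.mp (hqX.2.1.trans hq'.2.1.symm))
    (QuotientGroup.eq.mp (hqX.2.2.1.trans hq'.2.2.1.symm))
  rw [← hq'.2.2.2]
  exact (QuotientGroup.eq.mpr h4).symm

end Quotient

theorem nil_parallelepiped_general (G : Type) [Group G] (F Γ : Subgroup G)
    (h1 : commutator G ≤ F) (h2 : F ≤ Subgroup.center G) :
    IsStrongParallelepiped
      (map4 (QuotientGroup.mk : G → G ⧸ Γ) ''
        ((edgeGroup2 G : Set (Quad G)) * (quadSub F : Set (Quad G))))
      (mapCube (QuotientGroup.mk : G → G ⧸ Γ) ''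
        ((faceGroup G : Set (Cube G)) * (edgeGroup3 F : Set (Cube G)))) := by
  have := normal_of_le_center (quadSub_le_center h2)
  have := normal_of_le_center (edgeGroup3_le_center h2)
  rw [← Subgroup.mul_normal, ← Subgroup.mul_normal]
  have hface : ∀ x ∈ parallelepipedGroup F, ∀ i b, face x i b ∈ parallelogramGroup F :=
    fun x hx => face_mem_parallelogramGroup h1 hx
  have hsym : ∀ σ c, ∀ x ∈ parallelepipedGroup F,
      (fun v => x (cubeSym σ c v)) ∈ parallelepipedGroup F :=
    fun σ c x hx => comp_cubeSym_mem σ c hx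
  have hjoin : ∀ p ∈ parallelogramGroup F, joinQuad p p ∈ parallelepipedGroup F :=
    fun p hp => joinQuad_self_mem hp
  have hP : IsWeakParallelogram (map4 (QuotientGroup.mk : G → G ⧸ Γ) '' parallelogramGroup F) :=
    isWeakParallelogram_image _ (refl_mem_parallelogramGroup h1)
      (fun t ht => midSwap_mem_parallelogramGroup h1 ht)
      fun g h k => ⟨_, complete_mem_parallelogramGroup h1 g h k⟩
  exact ⟨⟨hP, face_mem_image hface, cubeSym_mem_image hsym, joinQuad_self_mem_image hjoin,
    joinQuad_symm_image hsym, joinQuad_trans_image hface hjoin,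
    fun _ _ _ _ _ _ _ hA hB hC => (existsUnique_top h1 h2 hA hB hC).exists⟩,
    fun _ _ _ _ _ _ _ hA hB hC => existsUnique_top h1 h2 hA hB hC⟩

/-- (Nilparallelepiped structures.) If `G₂ ⊆ F ⊆ Z(G)`, `Γ ∩ F = {1}` and
`π : G → G/Γ` is the coset projection, then the coordinatewise images of
`G^{[2,1]}·F^{[2]}` and `G^{[3,2]}·F^{[3,1]}` under `π` form a strong parallelepiped
structure on `G/Γ`. -/
theorem nil_parallelepiped (G : Type) [Group G] (F Γ : Subgroup G)
    (h1 : commutator G ≤ F) (h2 : F ≤ Subgroup.center G) (h3 : Γ ⊓ F = ⊥) :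
    IsStrongParallelepiped
      (map4 (QuotientGroup.mk : G → G ⧸ Γ) ''
        ((edgeGroup2 G : Set (Quad G)) * (quadSub F : Set (Quad G))))
      (mapCube (QuotientGroup.mk : G → G ⧸ Γ) ''
        ((faceGroup G : Set (Cube G)) * (edgeGroup3 F : Set (Cube G)))) :=
  nil_parallelepiped_general G F Γ h1 h2

end HK
end
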